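/- arXiv:2105.11787 — 9 statements merged into one kernel-verified Lean document; each statement's English description precedes it below -/
import Mathlib

section
/- Let G be a k-regular graph of order n, k ≥ 4, such that adjacent vertices have no common neighbour and every pair of non-adjacent vertices has exactly k−1, k−2, or k−3 common neighbours (each value attained by some pair). Then n ≤ k² + 1. -/
/-!
Since `k - 3 > 0`, any two non-adjacent vertices have a common neighbour, so the graph has
diameter at most two. Counting the vertices reachable from a fixed vertex `v` in at most two steps
gives the Moore bound `1 + k + k (k - 1) = k ^ 2 + 1`.
-/

namespace SimpleGraph

variable {V : Type*} [Fintype V] [DecidableEq V] {G : SimpleGraph V} [DecidableRel G.Adj]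

theorem univ_subset_insert_neighborFinset_union_biUnion {v : V}
    (hv : ∀ u, u ≠ v → ¬ G.Adj v u → ∃ w, G.Adj v w ∧ G.Adj w u) :
    Finset.univ ⊆ insert v (G.neighborFinset v ∪
      (G.neighborFinset v).biUnion fun w => (G.neighborFinset w).erase v) := by
  intro u _
  simp only [Finset.mem_insert, Finset.mem_union, Finset.mem_biUnion, Finset.mem_erase,
    mem_neighborFinset]
  by_cases huv : u = v
  · exact .inl huv
  by_cases hadj : G.Adj v u
  · exact .inr (.inl hadj)
  obtain ⟨w, hvw, hwu⟩ := hv u huv hadj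
  exact .inr (.inr ⟨w, hvw, huv, hwu⟩)

theorem card_le_of_forall_exists_adj_adj {v : V}
    (hv : ∀ u, u ≠ v → ¬ G.Adj v u → ∃ w, G.Adj v w ∧ G.Adj w u) :
    Fintype.card V ≤ G.degree v + ∑ w ∈ G.neighborFinset v, (G.degree w - 1) + 1 := by
  rw [← Finset.card_univ]
  refine (Finset.card_le_card (univ_subset_insert_neighborFinset_union_biUnion hv)).trans ?_
  refine (Finset.card_insert_le _ _).trans (Nat.add_le_add_right ?_ 1)
  refine (Finset.card_union_le _ _).trans (Nat.add_le_add (card_neighborFinset_eq_degree G v).le ?_)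
  refine Finset.card_biUnion_le.trans (Finset.sum_le_sum fun w hw => ?_)
  have hvw : v ∈ G.neighborFinset w :=
    (mem_neighborFinset G w v).2 ((mem_neighborFinset G v w).1 hw).symm
  rw [Finset.card_erase_of_mem hvw, card_neighborFinset_eq_degree]

theorem IsRegularOfDegree.card_le_sq_add_one {k : ℕ} (hreg : G.IsRegularOfDegree k) {v : V}
    (hv : ∀ u, u ≠ v → ¬ G.Adj v u → ∃ w, G.Adj v w ∧ G.Adj w u) :
    Fintype.card V ≤ k ^ 2 + 1 := by
  have hsum : ∑ w ∈ G.neighborFinset v, (G.degree w - 1) = k * (k - 1) := by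
    simp only [hreg.degree_eq, Finset.sum_const, card_neighborFinset_eq_degree, smul_eq_mul]
  have hmoore : k + k * (k - 1) = k ^ 2 := by
    cases k with
    | zero => rfl
    | succ m => simp only [Nat.add_sub_cancel]; ring
  have hcard := card_le_of_forall_exists_adj_adj hv
  rwa [hsum, hreg.degree_eq, hmoore] at hcard

end SimpleGraph

theorem stmt_3_general {V : Type*} [Fintype V] [DecidableEq V] (G : SimpleGraph V) [DecidableRel G.Adj]
    (n k : ℕ) (hk : 4 ≤ k) (hn : Fintype.card V = n)
    (hreg : G.IsRegularOfDegree k)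
    (hna : ∀ x y : V, x ≠ y → ¬ G.Adj x y →
      (G.neighborFinset x ∩ G.neighborFinset y).card = k - 1 ∨
      (G.neighborFinset x ∩ G.neighborFinset y).card = k - 2 ∨
      (G.neighborFinset x ∩ G.neighborFinset y).card = k - 3) :
    n ≤ k ^ 2 + 1 := by
  subst hn
  cases isEmpty_or_nonempty V with
  | inl _ => simp
  | inr hV =>
    obtain ⟨v⟩ := hV
    refine hreg.card_le_sq_add_one (v := v) fun u huv hadj => ?_
    have hcommon : (G.neighborFinset v ∩ G.neighborFinset u).Nonempty := by
      rw [← Finset.card_pos]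
      rcases hna v u (Ne.symm huv) hadj with h | h | h <;> omega
    obtain ⟨w, hw⟩ := hcommon
    simp only [Finset.mem_inter, SimpleGraph.mem_neighborFinset] at hw
    exact ⟨w, hw.1, hw.2.symm⟩

theorem stmt_3 {V : Type*} [Fintype V] [DecidableEq V] (G : SimpleGraph V) [DecidableRel G.Adj]
    (n k : ℕ) (hk : 4 ≤ k) (hn : Fintype.card V = n)
    (hreg : G.IsRegularOfDegree k)
    (ha : ∀ x y : V, G.Adj x y → G.neighborFinset x ∩ G.neighborFinset y = ∅)
    (hna : ∀ x y : V, x ≠ y → ¬ G.Adj x y →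
      (G.neighborFinset x ∩ G.neighborFinset y).card = k - 1 ∨
      (G.neighborFinset x ∩ G.neighborFinset y).card = k - 2 ∨
      (G.neighborFinset x ∩ G.neighborFinset y).card = k - 3)
    (hr1 : ∃ x y : V, x ≠ y ∧ ¬ G.Adj x y ∧
      (G.neighborFinset x ∩ G.neighborFinset y).card = k - 1)
    (hr2 : ∃ x y : V, x ≠ y ∧ ¬ G.Adj x y ∧
      (G.neighborFinset x ∩ G.neighborFinset y).card = k - 2)
    (hr3 : ∃ x y : V, x ≠ y ∧ ¬ G.Adj x y ∧
      (G.neighborFinset x ∩ G.neighborFinset y).card = k - 3) :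
    n ≤ k ^ 2 + 1 :=
  stmt_3_general G n k hk hn hreg hna
end

section
/- Let G be a k-regular graph of order n, k ≥ 4, such that adjacent vertices have no common neighbour and every pair of non-adjacent vertices has exactly k−1, k−2, or k−3 common neighbours (each value attained). If k² − 4 ≤ n ≤ k² + 1, then k = 4. -/
/-!
Fix a vertex `x`. Since adjacent vertices have no common neighbour, each of the `k` neighbours
of `x` has its remaining `k - 1` neighbours among the `n - k - 1` non-neighbours of `x`, so the
codegrees of `x` with its non-neighbours add up to `k (k - 1)`. Each of these codegrees is at
least `k - 3`, whence `(n - k - 1)(k - 3) ≤ k (k - 1)`, which fails for `k ≥ 5` once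
`n ≥ k² - 4`.
-/

open Finset

namespace SimpleGraph

variable {V : Type*} [Fintype V] [DecidableEq V] (G : SimpleGraph V) [DecidableRel G.Adj]

theorem sum_card_neighborFinset_inter_eq_sum_degree_sub_one
    (hG : ∀ x y, G.Adj x y → G.neighborFinset x ∩ G.neighborFinset y = ∅) (x : V) :
    ∑ y ∈ Gᶜ.neighborFinset x, #(G.neighborFinset x ∩ G.neighborFinset y) =
      ∑ z ∈ G.neighborFinset x, (G.degree z - 1) := by
  have hbelow : ∀ z ∈ G.neighborFinset x,
      (Gᶜ.neighborFinset x).bipartiteBelow G.Adj z = (G.neighborFinset z).erase x := by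
    intro z hxz
    ext y
    simp only [bipartiteBelow, mem_filter, mem_erase, mem_neighborFinset, compl_adj] at hxz ⊢
    refine ⟨fun ⟨⟨hxy, _⟩, hyz⟩ => ⟨hxy.symm, hyz.symm⟩,
      fun ⟨hyx, hzy⟩ => ⟨⟨hyx.symm, ?_⟩, hzy.symm⟩⟩
    intro hxy
    have hz : z ∈ G.neighborFinset x ∩ G.neighborFinset y := by
      simp [hxz, hzy.symm]
    simp [hG x y hxy] at hz
  calc ∑ y ∈ Gᶜ.neighborFinset x, #(G.neighborFinset x ∩ G.neighborFinset y)
      = ∑ y ∈ Gᶜ.neighborFinset x, #((G.neighborFinset x).bipartiteAbove G.Adj y) := by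
        congr! 2 with y
        ext z
        simp [bipartiteAbove, G.adj_comm y z]
    _ = ∑ z ∈ G.neighborFinset x, #((Gᶜ.neighborFinset x).bipartiteBelow G.Adj z) :=
        sum_card_bipartiteAbove_eq_sum_card_bipartiteBelow _
    _ = ∑ z ∈ G.neighborFinset x, (G.degree z - 1) := by
        refine sum_congr rfl fun z hz => ?_
        have hzx : x ∈ G.neighborFinset z := by
          rw [mem_neighborFinset] at hz ⊢
          exact hz.symm
        rw [hbelow z hz, card_erase_of_mem hzx, card_neighborFinset_eq_degree]

theorem card_sub_one_sub_mul_le_of_le_card_neighborFinset_inter {k c : ℕ}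
    (hG : ∀ x y, G.Adj x y → G.neighborFinset x ∩ G.neighborFinset y = ∅)
    (hreg : G.IsRegularOfDegree k)
    (hc : ∀ x y, x ≠ y → ¬ G.Adj x y → c ≤ #(G.neighborFinset x ∩ G.neighborFinset y))
    (x : V) :
    (Fintype.card V - 1 - k) * c ≤ k * (k - 1) :=
  calc (Fintype.card V - 1 - k) * c = #(Gᶜ.neighborFinset x) * c := by
        rw [card_neighborFinset_eq_degree, degree_compl, hreg x]
    _ ≤ ∑ y ∈ Gᶜ.neighborFinset x, #(G.neighborFinset x ∩ G.neighborFinset y) :=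
        card_nsmul_le_sum _ _ _ fun y hy => by
          rw [mem_neighborFinset, compl_adj] at hy
          exact hc x y hy.1 hy.2
    _ = k * (k - 1) := by
        rw [G.sum_card_neighborFinset_inter_eq_sum_degree_sub_one hG,
          sum_congr rfl fun z _ => by rw [hreg z], sum_const, card_neighborFinset_eq_degree,
          hreg x, smul_eq_mul]

end SimpleGraph

theorem le_four_of_sub_mul_le {k : ℕ} (h : (k ^ 2 - 4 - 1 - k) * (k - 3) ≤ k * (k - 1)) :
    k ≤ 4 := by
  by_contra! hk
  obtain ⟨a, rfl⟩ : ∃ a, k = a + 5 := ⟨k - 5, by omega⟩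
  have hsub : (a + 5) ^ 2 - 4 - 1 - (a + 5) = a ^ 2 + 9 * a + 15 := by
    rw [show (a + 5) ^ 2 = a ^ 2 + 9 * a + 15 + 4 + 1 + (a + 5) by ring]; omega
  rw [hsub, show a + 5 - 3 = a + 2 by omega, show a + 5 - 1 = a + 4 by omega] at h
  nlinarith

theorem stmt_4_general {V : Type*} [Fintype V] [DecidableEq V] (G : SimpleGraph V) [DecidableRel G.Adj]
    (n k : ℕ) (hk : 4 ≤ k) (hn : Fintype.card V = n)
    (hreg : G.IsRegularOfDegree k)
    (ha : ∀ x y : V, G.Adj x y → G.neighborFinset x ∩ G.neighborFinset y = ∅)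
    (hna : ∀ x y : V, x ≠ y → ¬ G.Adj x y →
      (G.neighborFinset x ∩ G.neighborFinset y).card = k - 1 ∨
      (G.neighborFinset x ∩ G.neighborFinset y).card = k - 2 ∨
      (G.neighborFinset x ∩ G.neighborFinset y).card = k - 3)
    (hlow : k ^ 2 - 4 ≤ n) :
    k = 4 := by
  have hk2 : 16 ≤ k ^ 2 := by nlinarith
  obtain ⟨x⟩ : Nonempty V := Fintype.card_pos_iff.mp (by omega)
  have hcodeg : ∀ x y, x ≠ y → ¬ G.Adj x y →
      k - 3 ≤ (G.neighborFinset x ∩ G.neighborFinset y).card :=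
    fun x y hxy hadj => by rcases hna x y hxy hadj with h | h | h <;> omega
  have hcount := G.card_sub_one_sub_mul_le_of_le_card_neighborFinset_inter ha hreg hcodeg x
  have hmono : (k ^ 2 - 4 - 1 - k) * (k - 3) ≤ (Fintype.card V - 1 - k) * (k - 3) :=
    Nat.mul_le_mul_right _ (by omega)
  exact le_antisymm (le_four_of_sub_mul_le (hmono.trans hcount)) hk

theorem stmt_4 {V : Type*} [Fintype V] [DecidableEq V] (G : SimpleGraph V) [DecidableRel G.Adj]
    (n k : ℕ) (hk : 4 ≤ k) (hn : Fintype.card V = n)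
    (hreg : G.IsRegularOfDegree k)
    (ha : ∀ x y : V, G.Adj x y → G.neighborFinset x ∩ G.neighborFinset y = ∅)
    (hna : ∀ x y : V, x ≠ y → ¬ G.Adj x y →
      (G.neighborFinset x ∩ G.neighborFinset y).card = k - 1 ∨
      (G.neighborFinset x ∩ G.neighborFinset y).card = k - 2 ∨
      (G.neighborFinset x ∩ G.neighborFinset y).card = k - 3)
    (hr1 : ∃ x y : V, x ≠ y ∧ ¬ G.Adj x y ∧
      (G.neighborFinset x ∩ G.neighborFinset y).card = k - 1)
    (hr2 : ∃ x y : V, x ≠ y ∧ ¬ G.Adj x y ∧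
      (G.neighborFinset x ∩ G.neighborFinset y).card = k - 2)
    (hr3 : ∃ x y : V, x ≠ y ∧ ¬ G.Adj x y ∧
      (G.neighborFinset x ∩ G.neighborFinset y).card = k - 3)
    (hlow : k ^ 2 - 4 ≤ n) (hhigh : n ≤ k ^ 2 + 1) :
    k = 4 :=
  stmt_4_general G n k hk hn hreg ha hna hlow
end

section
/- Let G be a 4-regular graph of order n such that adjacent vertices have no common neighbour and every pair of non-adjacent vertices has exactly 1, 2, or 3 common neighbours, with each of the three values realized. Then n ≤ 12. -/
/-!
Take non-adjacent `x, y` with three common neighbours `a, b, c`, and let `d`, `e` be the fourth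
neighbours of `x` and `y`. As `x` and `e` have a common neighbour, `d ~ e`. A vertex outside
`{x, y} ∪ N x ∪ N y` has a common neighbour with `x` and one with `y`; by triangle-freeness these
are not `d` and `e`, so it is one of the `children` of `a`, `b` or `c` (their neighbours other
than `x, y`). Hence there are at most `7 + 3 * 2 = 13` vertices, and if there are 13 all these
sets are disjoint. Then `d` and `e` see at most four of the six children, so some child `p`, say
of `a`, sees neither; its three neighbours besides `a` are children of `b` and `c`, so it sees
both children of `b` (say) and a child `q` of `c`. But `q` and `b` have a common neighbour, a
child of `b`, and it closes a triangle with `p` and `q`.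
-/

open Finset

theorem Finset.pairwiseDisjoint_of_sum_card_le_card_biUnion {ι α : Type*} [DecidableEq ι]
    [DecidableEq α] {s : Finset ι} {t : ι → Finset α} (h : ∑ i ∈ s, #(t i) ≤ #(s.biUnion t)) :
    (s : Set ι).PairwiseDisjoint t := by
  induction s using Finset.induction_on with
  | empty => simp
  | insert i s hi ih =>
    rw [sum_insert hi, biUnion_insert] at h
    have hs := card_biUnion_le (s := s) (t := t)
    have hu := card_union_le (t i) (s.biUnion t)
    have hdisj : Disjoint (t i) (s.biUnion t) := card_union_eq_card_add_card.1 (by omega)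
    rw [coe_insert]
    exact (ih (by omega)).insert fun j hj _ => hdisj.mono_right (subset_biUnion_of_mem t hj)

theorem Finset.disjoint_and_pairwiseDisjoint_of_card_le {ι α : Type*} [DecidableEq ι]
    [Fintype α] [DecidableEq α] {K : Finset α} {s : Finset ι} {t : ι → Finset α}
    (hcover : ∀ a, a ∈ K ∨ a ∈ s.biUnion t) (h : #K + ∑ i ∈ s, #(t i) ≤ Fintype.card α) :
    Disjoint K (s.biUnion t) ∧ (s : Set ι).PairwiseDisjoint t := by
  have hle := card_le_card (fun a _ => mem_union.2 (hcover a) : univ ⊆ K ∪ s.biUnion t)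
  have hu := card_union_le K (s.biUnion t)
  have hs := card_biUnion_le (s := s) (t := t)
  rw [card_univ] at hle
  exact ⟨card_union_eq_card_add_card.1 (by omega),
    pairwiseDisjoint_of_sum_card_le_card_biUnion (by omega)⟩

theorem Finset.nonempty_sdiff_union_of_card_inter_add_lt {α : Type*} [DecidableEq α]
    {s t u : Finset α} (h : #(s ∩ t) + #(s ∩ u) < #s) : (s \ (t ∪ u)).Nonempty := by
  rw [nonempty_iff_ne_empty, Ne, sdiff_eq_empty_iff_subset]
  intro hsub
  have hs : s ⊆ s ∩ t ∪ s ∩ u := by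
    rw [← inter_union_distrib_left]
    exact subset_inter subset_rfl hsub
  have := (card_le_card hs).trans (card_union_le _ _)
  omega

namespace SimpleGraph

variable {V : Type*} [DecidableEq V] {G : SimpleGraph V}

theorem CliqueFree.not_adj_of_adj_of_adj (hG : G.CliqueFree 3) {u v w : V} (huv : G.Adj u v)
    (huw : G.Adj u w) : ¬G.Adj v w :=
  fun hvw => hG {u, v, w} (is3Clique_triple_iff.2 ⟨huv, huw, hvw⟩)

variable [Fintype V] [DecidableRel G.Adj]

local notation "N" => G.neighborFinset

theorem cliqueFree_three_of_inter_neighborFinset_eq_empty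
    (h : ∀ u v, G.Adj u v → N u ∩ N v = ∅) : G.CliqueFree 3 := by
  intro s hs
  obtain ⟨u, v, w, huv, huw, hvw, -⟩ := is3Clique_iff.1 hs
  have hw : w ∈ N u ∩ N v := by simp [huw, hvw]
  simp [h u v huv] at hw

theorem card_inter_neighborFinset_le {s : Finset V} {d u v : V} (huv : u ≠ v) (hu : G.Adj d u)
    (hv : G.Adj d v) (hus : u ∉ s) (hvs : v ∉ s) : #(s ∩ N d) ≤ G.degree d - 2 := by
  have hsub : s ∩ N d ⊆ N d \ {u, v} := fun w hw => by
    rw [mem_inter] at hw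
    simp only [mem_sdiff, mem_insert, mem_singleton]
    exact ⟨hw.2, by rintro (rfl | rfl); exacts [hus hw.1, hvs hw.1]⟩
  refine (card_le_card hsub).trans_eq ?_
  rw [card_sdiff_of_subset (by simp [insert_subset_iff, hu, hv]), card_pair huv,
    card_neighborFinset_eq_degree]

theorem adj_of_neighborFinset_sdiff_eq_singleton (hG : G.CliqueFree 3)
    (hD : ∀ u v, u ≠ v → ¬G.Adj u v → ∃ w, G.Adj u w ∧ G.Adj v w) {x y d e : V}
    (hxy : ¬G.Adj x y) (hd : N x \ N y = {d}) (he : e ∈ N y \ N x) : G.Adj d e := by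
  simp only [mem_sdiff, mem_neighborFinset] at he
  obtain ⟨w, hxw, hew⟩ := hD x e (by rintro rfl; exact hxy he.1.symm) he.2
  have hyw : ¬G.Adj y w := fun hyw => hG.not_adj_of_adj_of_adj hyw he.1 hew.symm
  have hwd : w ∈ N x \ N y := by simp [hxw, hyw]
  rw [hd, mem_singleton] at hwd
  exact hwd ▸ hew.symm

variable (G) in
def children (x y w : V) : Finset V := N w \ {x, y}

theorem card_children {x y w : V} (hxy : x ≠ y) (hw : w ∈ N x ∩ N y) :
    #(G.children x y w) = G.degree w - 2 := by
  simp only [mem_inter, mem_neighborFinset] at hw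
  rw [children, card_sdiff_of_subset (by simp [insert_subset_iff, hw.1.symm, hw.2.symm]),
    card_pair hxy, card_neighborFinset_eq_degree]

theorem mem_or_mem_biUnion_children (hG : G.CliqueFree 3)
    (hD : ∀ u v, u ≠ v → ¬G.Adj u v → ∃ w, G.Adj u w ∧ G.Adj v w) {x y : V}
    (hde : ∀ d ∈ N x \ N y, ∀ e ∈ N y \ N x, G.Adj d e) (z : V) :
    z ∈ insert x (insert y (N x ∪ N y)) ∨ z ∈ (N x ∩ N y).biUnion (G.children x y) := by
  by_cases hz : z ∈ insert x (insert y (N x ∪ N y))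
  · exact Or.inl hz
  simp only [mem_insert, mem_union, mem_neighborFinset, not_or] at hz
  obtain ⟨hzx, hzy, hxz, hyz⟩ := hz
  obtain ⟨u, hxu, hzu⟩ := hD x z (Ne.symm hzx) hxz
  obtain ⟨v, hyv, hzv⟩ := hD y z (Ne.symm hzy) hyz
  have hzch : ∀ w, G.Adj z w → z ∈ G.children x y w := fun w h => by
    simp [children, h.symm, hzx, hzy]
  right
  rw [mem_biUnion]
  by_cases hyu : G.Adj y u
  · exact ⟨u, by simp [hxu, hyu], hzch u hzu⟩
  by_cases hxv : G.Adj x v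
  · exact ⟨v, by simp [hxv, hyv], hzch v hzv⟩
  exact absurd (hde u (by simp [hxu, hyu]) v (by simp [hyv, hxv]))
    (hG.not_adj_of_adj_of_adj hzu hzv)

theorem disjoint_and_pairwiseDisjoint_children (hreg : G.IsRegularOfDegree 4) {x y : V}
    (hxy : x ≠ y) (h3 : #(N x ∩ N y) = 3)
    (hcover : ∀ z, z ∈ insert x (insert y (N x ∪ N y)) ∨ z ∈ (N x ∩ N y).biUnion (G.children x y))
    (h13 : 12 < Fintype.card V) :
    Disjoint (insert x (insert y (N x ∪ N y))) ((N x ∩ N y).biUnion (G.children x y)) ∧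
      ((N x ∩ N y : Finset V) : Set V).PairwiseDisjoint (G.children x y) := by
  have hK : #(insert x (insert y (N x ∪ N y))) ≤ 7 := by
    have := card_union_add_card_inter (N x) (N y)
    have := card_insert_le x (insert y (N x ∪ N y))
    have := card_insert_le y (N x ∪ N y)
    rw [card_neighborFinset_eq_degree, card_neighborFinset_eq_degree, hreg x, hreg y, h3] at *
    omega
  refine disjoint_and_pairwiseDisjoint_of_card_le hcover ?_
  rw [sum_const_nat fun w hw => by rw [card_children hxy hw, hreg w], h3]
  omega

theorem exists_mem_biUnion_children_not_adj (hreg : G.IsRegularOfDegree 4) {x y d e : V}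
    (hxy : x ≠ y) (hnxy : ¬G.Adj x y) (h3 : #(N x ∩ N y) = 3) (hxd : G.Adj x d)
    (hye : G.Adj y e) (hde : G.Adj d e)
    (hKCh : Disjoint (insert x (insert y (N x ∪ N y))) ((N x ∩ N y).biUnion (G.children x y)))
    (hpair : ((N x ∩ N y : Finset V) : Set V).PairwiseDisjoint (G.children x y)) :
    ∃ p ∈ (N x ∩ N y).biUnion (G.children x y), ¬G.Adj d p ∧ ¬G.Adj e p := by
  set Ch := (N x ∩ N y).biUnion (G.children x y)
  have hnCh : ∀ z ∈ insert x (insert y (N x ∪ N y)), z ∉ Ch :=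
    fun _ hz => Finset.disjoint_left.1 hKCh hz
  have hdCh := card_inter_neighborFinset_le (s := Ch) (by rintro rfl; exact hnxy hye.symm)
    hxd.symm hde (hnCh x (by simp)) (hnCh e (by simp [hye]))
  have heCh := card_inter_neighborFinset_le (s := Ch) (by rintro rfl; exact hnxy hxd)
    hye.symm hde.symm (hnCh y (by simp)) (hnCh d (by simp [hxd]))
  have hCh : #Ch = 6 := by
    rw [card_biUnion hpair, sum_const_nat fun w hw => by rw [card_children hxy hw, hreg w], h3]
  rw [hreg d] at hdCh
  rw [hreg e] at heCh
  obtain ⟨p, hp⟩ :=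
    nonempty_sdiff_union_of_card_inter_add_lt (by omega : #(Ch ∩ N d) + #(Ch ∩ N e) < #Ch)
  simp only [mem_sdiff, mem_union, mem_neighborFinset, not_or] at hp
  exact ⟨p, hp⟩

theorem neighborFinset_subset_insert_biUnion_children (hG : G.CliqueFree 3) {x y d e a p : V}
    (hd : N x \ N y = {d}) (he : N y \ N x = {e})
    (hcover : ∀ z, z ∈ insert x (insert y (N x ∪ N y)) ∨ z ∈ (N x ∩ N y).biUnion (G.children x y))
    (hpK : p ∉ insert x (insert y (N x ∪ N y))) (hpa : p ∈ G.children x y a)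
    (hpT : ∀ w ∈ N x ∩ N y, w ≠ a → p ∉ G.children x y w) (hdp : ¬G.Adj d p)
    (hep : ¬G.Adj e p) : N p ⊆ insert a (((N x ∩ N y).erase a).biUnion (G.children x y)) := by
  intro w hw
  rw [mem_neighborFinset] at hw
  simp only [children, mem_sdiff, mem_neighborFinset, mem_insert, mem_singleton, not_or] at hpa
  rcases hcover w with hwK | hwCh
  · have hwxy : w ∈ N x ∪ N y := by
      simp only [mem_insert, mem_union, mem_neighborFinset] at hwK hpK ⊢
      rcases hwK with rfl | rfl | h | h
      exacts [absurd hw.symm (by tauto), absurd hw.symm (by tauto), Or.inl h, Or.inr h]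
    have hwT : w ∈ N x ∩ N y := by
      by_contra hwT
      have hw' : w ∈ (N x \ N y) ∪ (N y \ N x) := by
        simp only [mem_union, mem_inter, mem_sdiff] at hwxy hwT ⊢
        tauto
      rw [hd, he, mem_union, mem_singleton, mem_singleton] at hw'
      rcases hw' with rfl | rfl
      exacts [hdp hw.symm, hep hw.symm]
    by_cases hwa : w = a
    · exact hwa ▸ mem_insert_self _ _
    · exact absurd (by simp [children, hw.symm, hpa.2]) (hpT w hwT hwa)
  · obtain ⟨a', ha', hwa'⟩ := mem_biUnion.1 hwCh
    by_cases h : a' = a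
    · subst h
      simp only [children, mem_sdiff, mem_neighborFinset] at hwa'
      exact absurd hw (hG.not_adj_of_adj_of_adj hpa.1 hwa'.1)
    · exact mem_insert_of_mem (mem_biUnion.2 ⟨a', mem_erase.2 ⟨h, ha'⟩, hwa'⟩)

theorem exists_adj_mem_children
    (hD : ∀ u v, u ≠ v → ¬G.Adj u v → ∃ w, G.Adj u w ∧ G.Adj v w) {x y b q : V}
    (hb : b ∈ N x ∩ N y) (hqK : q ∉ insert x (insert y (N x ∪ N y)))
    (hqb : q ∉ G.children x y b) : ∃ r ∈ G.children x y b, G.Adj q r := by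
  simp only [mem_inter, mem_neighborFinset] at hb
  simp only [mem_insert, mem_union, mem_neighborFinset, not_or] at hqK
  obtain ⟨hqx, hqy, hxq, hyq⟩ := hqK
  obtain ⟨r, hqr, hbr⟩ := hD q b (by rintro rfl; exact hxq hb.1)
    (fun h => hqb (by simp [children, h.symm, hqx, hqy]))
  refine ⟨r, ?_, hqr⟩
  simp only [children, mem_sdiff, mem_neighborFinset, mem_insert, mem_singleton]
  exact ⟨hbr, by rintro (rfl | rfl) <;> simp_all [G.adj_comm]⟩

theorem false_of_neighborFinset_subset_insert_union (hG : G.CliqueFree 3) {p a : V}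
    {B C : Finset V} (hp : #(N p) = 4) (hB : #B ≤ 2) (hC : #C ≤ 2)
    (hNp : N p ⊆ insert a (B ∪ C)) (hBC : ∀ q ∈ C, ∃ r ∈ B, G.Adj q r)
    (hCB : ∀ q ∈ B, ∃ r ∈ C, G.Adj q r) : False := by
  have h3 : 3 ≤ #(N p ∩ B) + #(N p ∩ C) := by
    have hsub : N p ⊆ insert a (N p ∩ B ∪ N p ∩ C) := fun w hw => by
      have := hNp hw
      simp only [mem_insert, mem_union, mem_inter] at this ⊢
      tauto
    have := card_le_card hsub
    have := card_insert_le a (N p ∩ B ∪ N p ∩ C)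
    have := card_union_le (N p ∩ B) (N p ∩ C)
    omega
  wlog hpB : 2 ≤ #(N p ∩ B) generalizing B C
  · have hpC := card_le_card (inter_subset_right : N p ∩ C ⊆ C)
    exact this hC hB (by rwa [union_comm]) hCB hBC (by omega) (by omega)
  have hBsub : B ⊆ N p :=
    eq_of_subset_of_card_le inter_subset_right (hB.trans hpB) ▸ inter_subset_left
  obtain ⟨q, hq⟩ : (N p ∩ C).Nonempty := card_pos.1 (by
    have := card_le_card (inter_subset_right : N p ∩ B ⊆ B)
    omega)
  rw [mem_inter, mem_neighborFinset] at hq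
  obtain ⟨r, hrB, hqr⟩ := hBC q hq.2
  exact hG.not_adj_of_adj_of_adj hq.1 ((mem_neighborFinset ..).1 (hBsub hrB)) hqr

theorem false_of_mem_biUnion_children_not_adj (hG : G.CliqueFree 3)
    (hD : ∀ u v, u ≠ v → ¬G.Adj u v → ∃ w, G.Adj u w ∧ G.Adj v w)
    (hreg : G.IsRegularOfDegree 4) {x y d e p : V} (hxy : x ≠ y) (h3 : #(N x ∩ N y) = 3)
    (hd : N x \ N y = {d}) (he : N y \ N x = {e})
    (hcover : ∀ z, z ∈ insert x (insert y (N x ∪ N y)) ∨ z ∈ (N x ∩ N y).biUnion (G.children x y))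
    (hKCh : Disjoint (insert x (insert y (N x ∪ N y))) ((N x ∩ N y).biUnion (G.children x y)))
    (hpair : ((N x ∩ N y : Finset V) : Set V).PairwiseDisjoint (G.children x y))
    (hp : p ∈ (N x ∩ N y).biUnion (G.children x y)) (hdp : ¬G.Adj d p) (hep : ¬G.Adj e p) :
    False := by
  have hch : ∀ w ∈ N x ∩ N y, #(G.children x y w) = 2 := fun w hw => by
    rw [card_children hxy hw, hreg w]
  have hKC : ∀ {w q}, w ∈ N x ∩ N y → q ∈ G.children x y w → q ∉ insert x (insert y (N x ∪ N y)) :=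
    fun hw hq => Finset.disjoint_right.1 hKCh (mem_biUnion.2 ⟨_, hw, hq⟩)
  obtain ⟨a, ha, hpa⟩ := mem_biUnion.1 hp
  obtain ⟨b, c, hbc, hbc'⟩ := card_eq_two.1 (by rw [card_erase_of_mem ha, h3] :
    #((N x ∩ N y).erase a) = 2)
  have hb : b ∈ N x ∩ N y := mem_of_mem_erase (by rw [hbc']; simp)
  have hc : c ∈ N x ∩ N y := mem_of_mem_erase (by rw [hbc']; simp)
  have hNp := neighborFinset_subset_insert_biUnion_children hG hd he hcover (hKC ha hpa) hpa
    (fun w hw hwa => Finset.disjoint_left.1 (hpair ha hw (Ne.symm hwa)) hpa) hdp hep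
  rw [hbc', biUnion_insert, singleton_biUnion] at hNp
  refine false_of_neighborFinset_subset_insert_union hG
    (by rw [card_neighborFinset_eq_degree, hreg p]) (hch b hb).le (hch c hc).le hNp
    (fun q hq => ?_) (fun q hq => ?_)
  · exact exists_adj_mem_children hD hb (hKC hc hq) (Finset.disjoint_right.1 (hpair hb hc hbc) hq)
  · exact exists_adj_mem_children hD hc (hKC hb hq) (Finset.disjoint_left.1 (hpair hb hc hbc) hq)

theorem card_le_twelve_of_card_inter_neighborFinset_eq_three (hG : G.CliqueFree 3)
    (hD : ∀ u v, u ≠ v → ¬G.Adj u v → ∃ w, G.Adj u w ∧ G.Adj v w)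
    (hreg : G.IsRegularOfDegree 4) {x y : V} (hxy : x ≠ y) (hnxy : ¬G.Adj x y)
    (h3 : #(N x ∩ N y) = 3) : Fintype.card V ≤ 12 := by
  have hdeg : ∀ v, #(N v) = 4 := fun v => by rw [card_neighborFinset_eq_degree, hreg v]
  obtain ⟨d, hd⟩ : ∃ d, N x \ N y = {d} :=
    card_eq_one.1 (by rw [card_sdiff, inter_comm, h3, hdeg])
  obtain ⟨e, he⟩ : ∃ e, N y \ N x = {e} := card_eq_one.1 (by rw [card_sdiff, h3, hdeg])
  have hde : G.Adj d e := adj_of_neighborFinset_sdiff_eq_singleton hG hD hnxy hd (by simp [he])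
  have hcover := mem_or_mem_biUnion_children hG hD (x := x) (y := y) (by simp [hd, he, hde])
  have hxd : G.Adj x d := by
    have hdmem : d ∈ N x \ N y := by rw [hd]; exact mem_singleton_self d
    simpa using (mem_sdiff.1 hdmem).1
  have hye : G.Adj y e := by
    have hemem : e ∈ N y \ N x := by rw [he]; exact mem_singleton_self e
    simpa using (mem_sdiff.1 hemem).1
  by_contra! h13
  obtain ⟨hKCh, hpair⟩ := disjoint_and_pairwiseDisjoint_children hreg hxy h3 hcover h13
  obtain ⟨p, hp, hdp, hep⟩ :=
    exists_mem_biUnion_children_not_adj hreg hxy hnxy h3 hxd hye hde hKCh hpair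
  exact false_of_mem_biUnion_children_not_adj hG hD hreg hxy h3 hd he hcover hKCh hpair hp hdp hep

end SimpleGraph

theorem stmt_5_general {V : Type*} [Fintype V] [DecidableEq V] (G : SimpleGraph V) [DecidableRel G.Adj]
    (n : ℕ) (hn : Fintype.card V = n)
    (hreg : G.IsRegularOfDegree 4)
    (ha : ∀ x y : V, G.Adj x y → G.neighborFinset x ∩ G.neighborFinset y = ∅)
    (hna : ∀ x y : V, x ≠ y → ¬ G.Adj x y →
      (G.neighborFinset x ∩ G.neighborFinset y).card = 1 ∨
      (G.neighborFinset x ∩ G.neighborFinset y).card = 2 ∨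
      (G.neighborFinset x ∩ G.neighborFinset y).card = 3)
    (hr3 : ∃ x y : V, x ≠ y ∧ ¬ G.Adj x y ∧
      (G.neighborFinset x ∩ G.neighborFinset y).card = 3) :
    n ≤ 12 := by
  obtain ⟨x, y, hxy, hnxy, h3⟩ := hr3
  have hD : ∀ u v, u ≠ v → ¬G.Adj u v → ∃ w, G.Adj u w ∧ G.Adj v w := fun u v huv h => by
    obtain ⟨w, hw⟩ : (G.neighborFinset u ∩ G.neighborFinset v).Nonempty :=
      card_pos.1 (by rcases hna u v huv h with h | h | h <;> omega)
    exact ⟨w, by simpa using hw⟩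
  exact hn ▸ G.card_le_twelve_of_card_inter_neighborFinset_eq_three
    (G.cliqueFree_three_of_inter_neighborFinset_eq_empty ha) hD hreg hxy hnxy h3

theorem stmt_5 {V : Type*} [Fintype V] [DecidableEq V] (G : SimpleGraph V) [DecidableRel G.Adj]
    (n : ℕ) (hn : Fintype.card V = n)
    (hreg : G.IsRegularOfDegree 4)
    (ha : ∀ x y : V, G.Adj x y → G.neighborFinset x ∩ G.neighborFinset y = ∅)
    (hna : ∀ x y : V, x ≠ y → ¬ G.Adj x y →
      (G.neighborFinset x ∩ G.neighborFinset y).card = 1 ∨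
      (G.neighborFinset x ∩ G.neighborFinset y).card = 2 ∨
      (G.neighborFinset x ∩ G.neighborFinset y).card = 3)
    (hr1 : ∃ x y : V, x ≠ y ∧ ¬ G.Adj x y ∧
      (G.neighborFinset x ∩ G.neighborFinset y).card = 1)
    (hr2 : ∃ x y : V, x ≠ y ∧ ¬ G.Adj x y ∧
      (G.neighborFinset x ∩ G.neighborFinset y).card = 2)
    (hr3 : ∃ x y : V, x ≠ y ∧ ¬ G.Adj x y ∧
      (G.neighborFinset x ∩ G.neighborFinset y).card = 3) :
    n ≤ 12 :=
  stmt_5_general G n hn hreg ha hna hr3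
end

section
/- Let G be a k-regular graph of order n, k ≥ 4, such that adjacent vertices have no common neighbour and every pair of non-adjacent vertices has exactly k−1, k−2, or k−3 common neighbours (each value attained). Then n ≥ 2k + 2; that is, for any vertex u, the number of vertices outside N[u] is at least k + 1. -/
/-! Fix non-adjacent `x, y` with `k - 3` common neighbours and let `D` be the set of vertices
outside `N[x]`. Since `G` is triangle-free, each of the `k` neighbours of `x` has exactly `k - 1`
neighbours in `D`, so there are `k (k - 1)` edges between `N(x)` and `D`. Counted from `D`, every
vertex of `D` contributes at most `k - 1` edges and `y` contributes two fewer, whence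
`k (k - 1) + 2 ≤ |D| (k - 1)` and `|D| ≥ k + 1`. -/

open Finset

theorem Finset.sum_add_le_card_mul {α : Type*} [DecidableEq α] {s : Finset α} {f : α → ℕ}
    {b c : ℕ} {y : α} (hf : ∀ x ∈ s, f x ≤ b) (hy : y ∈ s) (hfy : f y + c ≤ b) :
    ∑ x ∈ s, f x + c ≤ #s * b := by
  calc ∑ x ∈ s, f x + c = ∑ x ∈ s.erase y, f x + (f y + c) := by
        rw [← add_sum_erase s f hy]; ring
    _ ≤ #(s.erase y) * b + b :=
        add_le_add (sum_le_card_nsmul _ _ _ fun x hx => hf x (mem_of_mem_erase hx)) hfy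
    _ = #s * b := by rw [← card_erase_add_one hy, add_one_mul]

namespace SimpleGraph

variable {V : Type*} [Fintype V] [DecidableEq V] {G : SimpleGraph V} [DecidableRel G.Adj]
  {k : ℕ}

theorem card_univ_sdiff_insert_neighborFinset (hreg : G.IsRegularOfDegree k) (u : V) :
    #(univ \ insert u (G.neighborFinset u)) = Fintype.card V - (k + 1) := by
  rw [card_univ_sdiff, card_insert_of_notMem (notMem_neighborFinset_self G u),
    card_neighborFinset_eq_degree, hreg u]

theorem sum_card_neighborFinset_inter_comm (s t : Finset V) :
    ∑ v ∈ s, #(G.neighborFinset v ∩ t) = ∑ w ∈ t, #(G.neighborFinset w ∩ s) := by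
  convert sum_card_bipartiteAbove_eq_sum_card_bipartiteBelow (r := G.Adj) using 3 with v _ w _
  · ext; simp [bipartiteAbove, and_comm]
  · ext; simp [bipartiteBelow, and_comm, G.adj_comm]

theorem neighborFinset_inter_insert_neighborFinset {x v : V} (hxv : G.Adj x v)
    (hdisj : G.neighborFinset x ∩ G.neighborFinset v = ∅) :
    insert x (G.neighborFinset x) ∩ G.neighborFinset v = {x} := by
  rw [insert_inter_of_mem ((mem_neighborFinset G v x).mpr hxv.symm), hdisj]
  rfl

theorem sum_card_neighborFinset_inter_outside_closedNbhd (hreg : G.IsRegularOfDegree k) {x : V}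
    (hdisj : ∀ v, G.Adj x v → G.neighborFinset x ∩ G.neighborFinset v = ∅) :
    ∑ w ∈ univ \ insert x (G.neighborFinset x), #(G.neighborFinset w ∩ G.neighborFinset x) =
      k * (k - 1) := by
  rw [← sum_card_neighborFinset_inter_comm, sum_const_nat (m := k - 1),
    card_neighborFinset_eq_degree, hreg x]
  intro v hv
  have hxv : G.Adj x v := (mem_neighborFinset G x v).mp hv
  rw [← compl_eq_univ_sdiff, ← sdiff_eq_inter_compl, card_sdiff,
    neighborFinset_inter_insert_neighborFinset hxv (hdisj v hxv), card_singleton,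
    card_neighborFinset_eq_degree, hreg v]

end SimpleGraph

open SimpleGraph

theorem stmt_6_general {V : Type*} [Fintype V] [DecidableEq V] (G : SimpleGraph V) [DecidableRel G.Adj]
    (n k : ℕ) (hk : 4 ≤ k) (hn : Fintype.card V = n)
    (hreg : G.IsRegularOfDegree k)
    (ha : ∀ x y : V, G.Adj x y → G.neighborFinset x ∩ G.neighborFinset y = ∅)
    (hna : ∀ x y : V, x ≠ y → ¬ G.Adj x y →
      (G.neighborFinset x ∩ G.neighborFinset y).card = k - 1 ∨
      (G.neighborFinset x ∩ G.neighborFinset y).card = k - 2 ∨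
      (G.neighborFinset x ∩ G.neighborFinset y).card = k - 3)
    (hr3 : ∃ x y : V, x ≠ y ∧ ¬ G.Adj x y ∧
      (G.neighborFinset x ∩ G.neighborFinset y).card = k - 3) :
    n ≥ 2 * k + 2 ∧ ∀ u : V, (Finset.univ \ insert u (G.neighborFinset u)).card ≥ k + 1 := by
  obtain ⟨x, y, hxy, hxy_nadj, hxy_common⟩ := hr3
  set D := univ \ insert x (G.neighborFinset x)
  have hmemD : ∀ w, w ∈ D ↔ x ≠ w ∧ ¬ G.Adj x w := by simp [D, eq_comm]
  have hcommon_le : ∀ w ∈ D, #(G.neighborFinset w ∩ G.neighborFinset x) ≤ k - 1 := by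
    intro w hw
    obtain ⟨hxw, hxw_nadj⟩ := (hmemD w).mp hw
    rw [inter_comm]
    rcases hna x w hxw hxw_nadj with h | h | h <;> omega
  have hedges : k * (k - 1) + 2 ≤ #D * (k - 1) := by
    rw [← sum_card_neighborFinset_inter_outside_closedNbhd hreg (ha x)]
    exact sum_add_le_card_mul hcommon_le ((hmemD y).mpr ⟨hxy, hxy_nadj⟩)
      (by rw [inter_comm]; omega)
  have hD : k + 1 ≤ #D := Nat.lt_of_mul_lt_mul_right (by omega : k * (k - 1) < #D * (k - 1))
  have hcard := card_univ_sdiff_insert_neighborFinset hreg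
  rw [hcard] at hD
  exact ⟨by omega, fun u => by rw [hcard u]; exact hD⟩

theorem stmt_6 {V : Type*} [Fintype V] [DecidableEq V] (G : SimpleGraph V) [DecidableRel G.Adj]
    (n k : ℕ) (hk : 4 ≤ k) (hn : Fintype.card V = n)
    (hreg : G.IsRegularOfDegree k)
    (ha : ∀ x y : V, G.Adj x y → G.neighborFinset x ∩ G.neighborFinset y = ∅)
    (hna : ∀ x y : V, x ≠ y → ¬ G.Adj x y →
      (G.neighborFinset x ∩ G.neighborFinset y).card = k - 1 ∨
      (G.neighborFinset x ∩ G.neighborFinset y).card = k - 2 ∨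
      (G.neighborFinset x ∩ G.neighborFinset y).card = k - 3)
    (hr1 : ∃ x y : V, x ≠ y ∧ ¬ G.Adj x y ∧
      (G.neighborFinset x ∩ G.neighborFinset y).card = k - 1)
    (hr2 : ∃ x y : V, x ≠ y ∧ ¬ G.Adj x y ∧
      (G.neighborFinset x ∩ G.neighborFinset y).card = k - 2)
    (hr3 : ∃ x y : V, x ≠ y ∧ ¬ G.Adj x y ∧
      (G.neighborFinset x ∩ G.neighborFinset y).card = k - 3) :
    n ≥ 2 * k + 2 ∧ ∀ u : V, (Finset.univ \ insert u (G.neighborFinset u)).card ≥ k + 1 :=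
  stmt_6_general G n k hk hn hreg ha hna hr3
end

section
/- Let G be a k-regular graph of order n, k ≥ 4, such that adjacent vertices have no common neighbour and every pair of non-adjacent vertices has exactly k−1, k−2, or k−3 common neighbours (each value attained). Then n ≥ 2k + 3. -/
/-!
Let `u, v` be non-adjacent with `k - 1` common neighbours, so each has exactly one private
neighbour, `u'` and `v'`. The vertices `u'` and `v` are non-adjacent, hence have a common
neighbour; it cannot lie in `N(u)` (no triangles through `u u'`), so it is `v'`. Then `u' ~ v'`,
and `N(u')`, `N(v')`, `N(u) ∩ N(v)` are pairwise disjoint, whence `n ≥ 3k - 1 ≥ 2k + 3`.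
-/

open Finset

namespace SimpleGraph

variable {V : Type*} [Fintype V] [DecidableEq V] {G : SimpleGraph V} [DecidableRel G.Adj]
  {k : ℕ} {u v u' v' : V}

lemma exists_sdiff_neighborFinset_eq_singleton (hreg : G.IsRegularOfDegree k)
    (hμ : #(G.neighborFinset u ∩ G.neighborFinset v) + 1 = k) :
    ∃ w, G.neighborFinset u \ G.neighborFinset v = {w} := by
  have hsplit := card_sdiff_add_card_inter (G.neighborFinset u) (G.neighborFinset v)
  rw [card_neighborFinset_eq_degree, hreg u] at hsplit
  exact card_eq_one.1 (by omega)

lemma adj_of_sdiff_neighborFinset_eq_singleton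
    (hdisj : ∀ x y, G.Adj x y → Disjoint (G.neighborFinset x) (G.neighborFinset y))
    (hcommon : ∀ x y, x ≠ y → ¬G.Adj x y → (G.neighborFinset x ∩ G.neighborFinset y).Nonempty)
    (huv : ¬G.Adj u v) (hu' : G.neighborFinset u \ G.neighborFinset v = {u'})
    (hv' : G.neighborFinset v \ G.neighborFinset u = {v'}) :
    G.Adj u' v' := by
  obtain ⟨hu'u, hu'v⟩ := mem_sdiff.1 (hu' ▸ mem_singleton_self u')
  rw [mem_neighborFinset] at hu'u hu'v
  have hne : u' ≠ v := by rintro rfl; exact huv hu'u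
  obtain ⟨w, hw⟩ := hcommon u' v hne (fun h => hu'v h.symm)
  obtain ⟨hwu', hwv⟩ := mem_inter.1 hw
  have hwu : w ∉ G.neighborFinset u := Finset.disjoint_left.1 (hdisj u' u hu'u.symm) hwu'
  have hwv' : w = v' := mem_singleton.1 (hv' ▸ mem_sdiff.2 ⟨hwv, hwu⟩)
  exact (mem_neighborFinset _ _ _).1 (hwv' ▸ hwu')

theorem three_mul_le_card_add_one (hreg : G.IsRegularOfDegree k)
    (hdisj : ∀ x y, G.Adj x y → Disjoint (G.neighborFinset x) (G.neighborFinset y))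
    (hcommon : ∀ x y, x ≠ y → ¬G.Adj x y → (G.neighborFinset x ∩ G.neighborFinset y).Nonempty)
    (huv : ¬G.Adj u v) (hμ : #(G.neighborFinset u ∩ G.neighborFinset v) + 1 = k) :
    3 * k ≤ Fintype.card V + 1 := by
  obtain ⟨u', hu'⟩ := exists_sdiff_neighborFinset_eq_singleton hreg hμ
  obtain ⟨v', hv'⟩ := exists_sdiff_neighborFinset_eq_singleton (v := u) hreg (by rwa [inter_comm])
  have hadj := adj_of_sdiff_neighborFinset_eq_singleton hdisj hcommon huv hu' hv'
  have hu'u := (mem_neighborFinset _ _ _).1 (mem_sdiff.1 (hu' ▸ mem_singleton_self u')).1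
  have hv'v := (mem_neighborFinset _ _ _).1 (mem_sdiff.1 (hv' ▸ mem_singleton_self v')).1
  have hC : Disjoint (G.neighborFinset u' ∪ G.neighborFinset v')
      (G.neighborFinset u ∩ G.neighborFinset v) :=
    disjoint_union_left.2 ⟨(hdisj u' u hu'u.symm).mono_right inter_subset_left,
      (hdisj v' v hv'v.symm).mono_right inter_subset_right⟩
  calc 3 * k = #(G.neighborFinset u') + #(G.neighborFinset v')
        + #(G.neighborFinset u ∩ G.neighborFinset v) + 1 := by
        simp only [card_neighborFinset_eq_degree, hreg u', hreg v']; omega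
    _ = #(G.neighborFinset u' ∪ G.neighborFinset v' ∪
          (G.neighborFinset u ∩ G.neighborFinset v)) + 1 := by
        rw [card_union_of_disjoint hC, card_union_of_disjoint (hdisj u' v' hadj)]
    _ ≤ Fintype.card V + 1 := Nat.add_le_add_right (card_le_univ _) 1

end SimpleGraph

theorem stmt_7_general {V : Type*} [Fintype V] [DecidableEq V] (G : SimpleGraph V) [DecidableRel G.Adj]
    (n k : ℕ) (hk : 4 ≤ k) (hn : Fintype.card V = n)
    (hreg : G.IsRegularOfDegree k)
    (ha : ∀ x y : V, G.Adj x y → G.neighborFinset x ∩ G.neighborFinset y = ∅)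
    (hna : ∀ x y : V, x ≠ y → ¬ G.Adj x y →
      (G.neighborFinset x ∩ G.neighborFinset y).card = k - 1 ∨
      (G.neighborFinset x ∩ G.neighborFinset y).card = k - 2 ∨
      (G.neighborFinset x ∩ G.neighborFinset y).card = k - 3)
    (hr1 : ∃ x y : V, x ≠ y ∧ ¬ G.Adj x y ∧
      (G.neighborFinset x ∩ G.neighborFinset y).card = k - 1) :
    n ≥ 2 * k + 3 := by
  obtain ⟨u, v, -, huv, hμ⟩ := hr1
  have hcommon : ∀ x y : V, x ≠ y → ¬ G.Adj x y →
      (G.neighborFinset x ∩ G.neighborFinset y).Nonempty := fun x y hxy hxy' =>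
    card_pos.1 (by rcases hna x y hxy hxy' with h | h | h <;> omega)
  have := G.three_mul_le_card_add_one hreg
    (fun x y hxy => disjoint_iff_inter_eq_empty.2 (ha x y hxy)) hcommon huv (by omega)
  omega

theorem stmt_7 {V : Type*} [Fintype V] [DecidableEq V] (G : SimpleGraph V) [DecidableRel G.Adj]
    (n k : ℕ) (hk : 4 ≤ k) (hn : Fintype.card V = n)
    (hreg : G.IsRegularOfDegree k)
    (ha : ∀ x y : V, G.Adj x y → G.neighborFinset x ∩ G.neighborFinset y = ∅)
    (hna : ∀ x y : V, x ≠ y → ¬ G.Adj x y →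
      (G.neighborFinset x ∩ G.neighborFinset y).card = k - 1 ∨
      (G.neighborFinset x ∩ G.neighborFinset y).card = k - 2 ∨
      (G.neighborFinset x ∩ G.neighborFinset y).card = k - 3)
    (hr1 : ∃ x y : V, x ≠ y ∧ ¬ G.Adj x y ∧
      (G.neighborFinset x ∩ G.neighborFinset y).card = k - 1)
    (hr2 : ∃ x y : V, x ≠ y ∧ ¬ G.Adj x y ∧
      (G.neighborFinset x ∩ G.neighborFinset y).card = k - 2)
    (hr3 : ∃ x y : V, x ≠ y ∧ ¬ G.Adj x y ∧
      (G.neighborFinset x ∩ G.neighborFinset y).card = k - 3) :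
    n ≥ 2 * k + 3 :=
  stmt_7_general G n k hk hn hreg ha hna hr1
end

section
/- Let G be a k-regular graph of order n, k ≥ 4, such that adjacent vertices have no common neighbour and every pair of non-adjacent vertices has exactly k−1, k−2, or k−3 common neighbours (each value attained). If n = 2k + 3, then k = 4 (and hence n = 11). -/
/-!
Take non-adjacent `x`, `y` with `k - 1` common neighbours. For `k > 4`, `x` has a neighbour
`x₁` outside `N(y)`. By triangle-freeness every common neighbour of `x₁` and `y` lies in
`N(y) \ N(x)`, a set of size one, while `x₁` and `y` are non-adjacent and so have at least
`k - 3 ≥ 2` common neighbours.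
-/

open Finset

namespace SimpleGraph

variable {V : Type*} [DecidableEq V] {G : SimpleGraph V} [G.LocallyFinite]

theorem exists_adj_not_adj_of_card_inter_lt_degree {x y : V}
    (hlt : #(G.neighborFinset x ∩ G.neighborFinset y) < G.degree x) :
    ∃ x₁, G.Adj x x₁ ∧ ¬G.Adj x₁ y := by
  have hsdiff : 0 < #(G.neighborFinset x \ G.neighborFinset y) := by
    have := card_inter_add_card_sdiff (G.neighborFinset x) (G.neighborFinset y)
    rw [card_neighborFinset_eq_degree] at this
    omega
  obtain ⟨x₁, hx₁⟩ := card_pos.mp hsdiff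
  rw [mem_sdiff, mem_neighborFinset, mem_neighborFinset] at hx₁
  exact ⟨x₁, hx₁.1, fun h ↦ hx₁.2 h.symm⟩

theorem card_inter_neighborFinset_le_card_sdiff {x x₁ : V}
    (hdisj : Disjoint (G.neighborFinset x) (G.neighborFinset x₁)) (y : V) :
    #(G.neighborFinset x₁ ∩ G.neighborFinset y) ≤ #(G.neighborFinset y \ G.neighborFinset x) :=
  card_le_card <| subset_sdiff.2 ⟨inter_subset_right, (hdisj.symm.mono_left inter_subset_left)⟩

theorem IsRegularOfDegree.le_four_of_card_inter_eq_pred {k : ℕ} (hreg : G.IsRegularOfDegree k)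
    (hdisj : ∀ x y, G.Adj x y → Disjoint (G.neighborFinset x) (G.neighborFinset y))
    (hcodeg : ∀ x y, x ≠ y → ¬G.Adj x y → k - 3 ≤ #(G.neighborFinset x ∩ G.neighborFinset y))
    {x y : V} (hxy : ¬G.Adj x y) (hcard : #(G.neighborFinset x ∩ G.neighborFinset y) = k - 1) :
    k ≤ 4 := by
  by_contra! hk
  obtain ⟨x₁, hxx₁, hx₁y⟩ :=
    exists_adj_not_adj_of_card_inter_lt_degree (x := x) (y := y) (by rw [hreg.degree_eq]; omega)
  have hx₁_ne_y : x₁ ≠ y := by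
    rintro rfl
    exact hxy hxx₁
  have hsdiff : #(G.neighborFinset y \ G.neighborFinset x) = 1 := by
    rw [card_sdiff, card_neighborFinset_eq_degree, hreg.degree_eq, hcard]
    omega
  have := card_inter_neighborFinset_le_card_sdiff (hdisj x x₁ hxx₁) y
  have := hcodeg x₁ y hx₁_ne_y hx₁y
  omega

end SimpleGraph

theorem stmt_8_general {V : Type*} [Fintype V] [DecidableEq V] (G : SimpleGraph V) [DecidableRel G.Adj]
    (n k : ℕ) (hk : 4 ≤ k)
    (hreg : G.IsRegularOfDegree k)
    (ha : ∀ x y : V, G.Adj x y → G.neighborFinset x ∩ G.neighborFinset y = ∅)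
    (hna : ∀ x y : V, x ≠ y → ¬ G.Adj x y →
      (G.neighborFinset x ∩ G.neighborFinset y).card = k - 1 ∨
      (G.neighborFinset x ∩ G.neighborFinset y).card = k - 2 ∨
      (G.neighborFinset x ∩ G.neighborFinset y).card = k - 3)
    (hr1 : ∃ x y : V, x ≠ y ∧ ¬ G.Adj x y ∧
      (G.neighborFinset x ∩ G.neighborFinset y).card = k - 1)
    (hn23 : n = 2 * k + 3) :
    k = 4 ∧ n = 11 := by
  obtain ⟨x, y, -, hxy, hcard⟩ := hr1
  have hk4 : k ≤ 4 :=
    hreg.le_four_of_card_inter_eq_pred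
      (fun x y h ↦ disjoint_iff_inter_eq_empty.2 (ha x y h))
      (fun x y hne hnadj ↦ by rcases hna x y hne hnadj with h | h | h <;> omega)
      hxy hcard
  omega

theorem stmt_8 {V : Type*} [Fintype V] [DecidableEq V] (G : SimpleGraph V) [DecidableRel G.Adj]
    (n k : ℕ) (hk : 4 ≤ k) (hn : Fintype.card V = n)
    (hreg : G.IsRegularOfDegree k)
    (ha : ∀ x y : V, G.Adj x y → G.neighborFinset x ∩ G.neighborFinset y = ∅)
    (hna : ∀ x y : V, x ≠ y → ¬ G.Adj x y →
      (G.neighborFinset x ∩ G.neighborFinset y).card = k - 1 ∨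
      (G.neighborFinset x ∩ G.neighborFinset y).card = k - 2 ∨
      (G.neighborFinset x ∩ G.neighborFinset y).card = k - 3)
    (hr1 : ∃ x y : V, x ≠ y ∧ ¬ G.Adj x y ∧
      (G.neighborFinset x ∩ G.neighborFinset y).card = k - 1)
    (hr2 : ∃ x y : V, x ≠ y ∧ ¬ G.Adj x y ∧
      (G.neighborFinset x ∩ G.neighborFinset y).card = k - 2)
    (hr3 : ∃ x y : V, x ≠ y ∧ ¬ G.Adj x y ∧
      (G.neighborFinset x ∩ G.neighborFinset y).card = k - 3)
    (hn23 : n = 2 * k + 3) :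
    k = 4 ∧ n = 11 :=
  stmt_8_general G n k hk hreg ha hna hr1 hn23
end

section
/- Let G be a k-regular graph of order n, k ≥ 4, in which adjacent vertices have no common neighbour and non-adjacent vertices have at most k−1 common neighbours. If n = 2k (that is, for some vertex u there are exactly k−1 vertices outside N[u]), then a contradiction arises; hence n ≥ 2k + 1. -/
/-!
Fix a vertex `u` and double count the edges between `N(u)` and the set `T` of vertices outside
`N[u]`. Since adjacent vertices have no common neighbour, each `v ∈ N(u)` sends all of its
neighbours except `u` into `T`, giving `k (k - 1)` edges; each `w ∈ T` receives at most `k - 1`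
of them. Hence `k (k - 1) ≤ |T| (k - 1) = (n - k - 1)(k - 1)`, i.e. `n ≥ 2k + 1` once `k ≥ 2`.
-/

open Finset

namespace SimpleGraph

variable {V : Type*} [Fintype V] [DecidableEq V] (G : SimpleGraph V) [DecidableRel G.Adj]

theorem card_compl_insert_neighborFinset (u : V) :
    #(insert u (G.neighborFinset u))ᶜ = Fintype.card V - G.degree u - 1 := by
  rw [card_compl, card_insert_of_notMem (G.notMem_neighborFinset_self u),
    card_neighborFinset_eq_degree]
  omega

theorem card_filter_adj_compl_insert_neighborFinset {u v : V} (huv : G.Adj u v)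
    (hdisj : G.neighborFinset u ∩ G.neighborFinset v = ∅) :
    #{w ∈ (insert u (G.neighborFinset u))ᶜ | G.Adj v w} = G.degree v - 1 := by
  have : {w ∈ (insert u (G.neighborFinset u))ᶜ | G.Adj v w} = (G.neighborFinset v).erase u := by
    ext w
    simp only [mem_filter, mem_compl, mem_insert, mem_erase, mem_neighborFinset, not_or]
    constructor
    · rintro ⟨⟨hwu, -⟩, hvw⟩
      exact ⟨hwu, hvw⟩
    · rintro ⟨hwu, hvw⟩
      refine ⟨⟨hwu, fun huw => ?_⟩, hvw⟩
      have : w ∈ G.neighborFinset u ∩ G.neighborFinset v := by simp [huw, hvw]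
      simp [hdisj] at this
  rw [this, card_erase_of_mem (by simpa using huv.symm), card_neighborFinset_eq_degree]

theorem sum_card_filter_adj_eq_sum_card_common (u : V) (T : Finset V) :
    ∑ v ∈ G.neighborFinset u, #{w ∈ T | G.Adj v w} =
      ∑ w ∈ T, #(G.neighborFinset u ∩ G.neighborFinset w) := by
  refine (sum_card_bipartiteAbove_eq_sum_card_bipartiteBelow G.Adj).trans (sum_congr rfl ?_)
  intro w _
  congr 1
  ext v
  simp [bipartiteBelow, G.adj_comm v w]

theorem two_mul_add_one_le_card {k : ℕ} (hk : 2 ≤ k) (hreg : G.IsRegularOfDegree k)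
    (ha : ∀ x y : V, G.Adj x y → G.neighborFinset x ∩ G.neighborFinset y = ∅)
    (hna : ∀ x y : V, x ≠ y → ¬ G.Adj x y → #(G.neighborFinset x ∩ G.neighborFinset y) ≤ k - 1)
    (u : V) :
    2 * k + 1 ≤ Fintype.card V := by
  set T := (insert u (G.neighborFinset u))ᶜ
  have hT : #T = Fintype.card V - k - 1 := by
    rw [G.card_compl_insert_neighborFinset, hreg u]
  have hcommon : ∀ w ∈ T, #(G.neighborFinset u ∩ G.neighborFinset w) ≤ k - 1 := by
    intro w hw
    simp only [T, mem_compl, mem_insert, mem_neighborFinset, not_or] at hw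
    exact hna u w (Ne.symm hw.1) hw.2
  have hcount : k * (k - 1) ≤ #T * (k - 1) := calc
    k * (k - 1) = ∑ v ∈ G.neighborFinset u, (k - 1) := by
      rw [sum_const, card_neighborFinset_eq_degree, hreg u, smul_eq_mul]
    _ = ∑ v ∈ G.neighborFinset u, #{w ∈ T | G.Adj v w} := by
      refine sum_congr rfl fun v hv => ?_
      rw [mem_neighborFinset] at hv
      rw [G.card_filter_adj_compl_insert_neighborFinset hv (ha u v hv), hreg v]
    _ = ∑ w ∈ T, #(G.neighborFinset u ∩ G.neighborFinset w) :=
      G.sum_card_filter_adj_eq_sum_card_common u T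
    _ ≤ #T * (k - 1) := by
      simpa using sum_le_card_nsmul T (fun w => #(G.neighborFinset u ∩ G.neighborFinset w)) _
        hcommon
  have := Nat.le_of_mul_le_mul_right hcount (by omega)
  omega

end SimpleGraph

theorem stmt_10 {V : Type*} [Fintype V] [DecidableEq V] (G : SimpleGraph V) [DecidableRel G.Adj]
    (n k : ℕ) (hk : 4 ≤ k) (hn : Fintype.card V = n)
    (hreg : G.IsRegularOfDegree k)
    (ha : ∀ x y : V, G.Adj x y → G.neighborFinset x ∩ G.neighborFinset y = ∅)
    (hna : ∀ x y : V, x ≠ y → ¬ G.Adj x y →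
      (G.neighborFinset x ∩ G.neighborFinset y).card ≤ k - 1) :
    n ≠ 2 * k := by
  intro hcard
  obtain ⟨u⟩ : Nonempty V := Fintype.card_pos_iff.mp (by omega)
  have := G.two_mul_add_one_le_card (by omega) hreg ha hna u
  omega
end

section
/- Every SQSR(12, 4, 0; 3, 2, 1) graph is isomorphic to a single graph G₂; that is, up to isomorphism there is a unique 4-regular graph on 12 vertices in which adjacent vertices have no common neighbour and non-adjacent vertices have exactly 1, 2, or 3 common neighbours with each value realized. -/
/-- Edge list of the graph `G₂`: vertices `0=x, 1=y, 2=x₁, 3=y₁, 4=z₁, 5=z₂, 6=z₃,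
`7=a₁, 8=a₂, 9=a₃, 10=a₄, 11=a₅`. -/
def g2Edges : List (Fin 12 × Fin 12) :=
  [(0, 2), (0, 4), (0, 5), (0, 6),
   (1, 3), (1, 4), (1, 5), (1, 6),
   (2, 3), (2, 7), (2, 8),
   (3, 10), (3, 11),
   (4, 7), (4, 9),
   (5, 8), (5, 10),
   (6, 9), (6, 11),
   (7, 10), (7, 11),
   (8, 11), (8, 9),
   (9, 10)]

/-- The unique `SQSR(12, 4, 0; 3, 2, 1)` graph `G₂` from the paper. -/
def G2 : SimpleGraph (Fin 12) := SimpleGraph.fromRel (fun a b => (a, b) ∈ g2Edges)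

instance : DecidableRel G2.Adj := fun a b =>
  decidable_of_iff _ (SimpleGraph.fromRel_adj (fun a b => (a, b) ∈ g2Edges) a b).symm

/-!
Take non-adjacent vertices `x`, `y` with three common neighbours `z₁, z₂, z₃`, and let `x₁`, `y₁`
be their fourth neighbours. Since `x` and `y₁` need a common neighbour and the `zᵢ` would close a
triangle, `x₁ ~ y₁`; then `N(x₁)`, `N(y₁)` and `{z₁, z₂, z₃}` are disjoint and leave exactly one
vertex `a₃`. Naming the remaining vertices after their position relative to `x₁`, `y₁` and `a₃`
fixes 15 of the 24 edges of `G₂`, and a short case analysis, using only that every vertex has four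
neighbours, adjacent vertices none in common and non-adjacent vertices at least one, forces the
other nine. This gives a homomorphism `G₂ →g G`. Any two distinct vertices of `G₂` are joined by a
walk of length one or three, whose image a triangle-free graph cannot close up, so the
homomorphism is injective, hence bijective, and between 4-regular graphs a bijective homomorphism
is an isomorphism.
-/

open Finset

namespace SimpleGraph

variable {V W : Type*}

theorem Hom.injective_of_adj_or_path_three {G : SimpleGraph V} {H : SimpleGraph W}
    (hG : ∀ ⦃u v w⦄, G.Adj u v → G.Adj u w → ¬ G.Adj v w)
    (hH : ∀ i j, i ≠ j → H.Adj i j ∨ ∃ a b, H.Adj i a ∧ H.Adj a b ∧ H.Adj b j)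
    (f : H →g G) : Function.Injective f := by
  intro i j hij
  by_contra hne
  rcases hH i j hne with h | ⟨a, b, hia, hab, hbj⟩
  · exact G.irrefl (hij ▸ f.map_adj h)
  · exact hG (f.map_adj hia) (hij ▸ (f.map_adj hbj).symm) (f.map_adj hab)

theorem Hom.nonempty_iso_of_bijective [Fintype V] [Fintype W] {G : SimpleGraph V}
    {H : SimpleGraph W} [DecidableRel G.Adj] [DecidableRel H.Adj] (f : H →g G)
    (hf : Function.Bijective f) (hdeg : ∀ w, G.degree (f w) ≤ H.degree w) :
    Nonempty (H ≃g G) := by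
  refine ⟨⟨Equiv.ofBijective f hf, fun {a b} => ⟨fun h => ?_, f.map_adj⟩⟩⟩
  have hsub : (H.neighborFinset a).map ⟨f, hf.1⟩ ⊆ G.neighborFinset (f a) := by
    intro v hv
    obtain ⟨c, hc, rfl⟩ := mem_map.1 hv
    exact (mem_neighborFinset _ _ _).2 (f.map_adj ((mem_neighborFinset _ _ _).1 hc))
  have heq := eq_of_subset_of_card_le hsub (by simpa using hdeg a)
  obtain ⟨c, hc, hcb⟩ := mem_map.1 (heq ▸ (mem_neighborFinset _ _ _).2 h)
  exact hf.1 hcb ▸ (mem_neighborFinset _ _ _).1 hc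

def edgeListGraph (l : List (V × V)) : SimpleGraph V := fromRel fun a b => (a, b) ∈ l

instance [DecidableEq V] (l : List (V × V)) : DecidableRel (edgeListGraph l).Adj := fun a b =>
  decidable_of_iff _ (fromRel_adj (fun a b => (a, b) ∈ l) a b).symm

theorem edgeListGraph_le {G : SimpleGraph V} {l : List (V × V)}
    (h : ∀ p ∈ l, G.Adj p.1 p.2) : edgeListGraph l ≤ G :=
  fun _ _ ⟨_, hp⟩ => hp.elim (h _) fun hp => (h _ hp).symm

theorem exists_equiv_edgeListGraph_le [Fintype V] [Fintype W] {G : SimpleGraph V}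
    (hcard : Fintype.card W = Fintype.card V) {f : W → V} (hf : Function.Surjective f)
    {l : List (W × W)} (hl : ∀ p ∈ l, G.Adj (f p.1) (f p.2)) :
    ∃ e : W ≃ V, edgeListGraph l ≤ G.comap e :=
  ⟨Equiv.ofBijective f ((Fintype.bijective_iff_surjective_and_card f).2 ⟨hf, hcard⟩),
    edgeListGraph_le hl⟩

theorem adj_of_insert_eq_neighborFinset [Fintype V] [DecidableEq V] {G : SimpleGraph V}
    [DecidableRel G.Adj] {v a : V} {s : Finset V} (h : insert a s = G.neighborFinset v) :
    G.Adj v a := by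
  rw [← mem_neighborFinset, ← h]
  exact mem_insert_self a s

structure Realizes (G : SimpleGraph V) (l l' : List (V × V)) : Prop where
  le : edgeListGraph l ≤ G
  not_adj : ∀ p ∈ l', ¬ G.Adj p.1 p.2

theorem Realizes.of_le {G : SimpleGraph V} {l : List (V × V)} (h : edgeListGraph l ≤ G) :
    G.Realizes l [] :=
  ⟨h, by simp⟩

theorem Realizes.cons {G : SimpleGraph V} {l l' : List (V × V)} (hR : G.Realizes l l') {a b : V}
    (h : G.Adj a b) : G.Realizes ((a, b) :: l) l' := by
  refine ⟨fun u v ⟨hne, huv⟩ => ?_, hR.not_adj⟩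
  simp only [List.mem_cons, Prod.mk.injEq] at huv
  rcases huv with (⟨rfl, rfl⟩ | hm) | (⟨rfl, rfl⟩ | hm)
  · exact h
  · exact hR.le ⟨hne, .inl hm⟩
  · exact h.symm
  · exact hR.le ⟨hne, .inr hm⟩

section Admissible

variable [Fintype V] [DecidableEq V]

def Admissible (l l' : List (V × V)) (u v : V) : Prop :=
  u ≠ v ∧ (u, v) ∉ l' ∧ (v, u) ∉ l' ∧
    (∀ w, ¬ ((edgeListGraph l).Adj w u ∧ (edgeListGraph l).Adj w v)) ∧
    ((edgeListGraph l).degree u = 4 → (edgeListGraph l).Adj u v) ∧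
    ((edgeListGraph l).degree v = 4 → (edgeListGraph l).Adj u v)

instance (l l' : List (V × V)) (u v : V) : Decidable (Admissible l l' u v) := by
  unfold Admissible; infer_instance

end Admissible

structure IsTriangleFreeQuarticDiamTwo [Fintype V] (G : SimpleGraph V) [DecidableRel G.Adj] :
    Prop where
  regular : G.IsRegularOfDegree 4
  not_adj_of_adj_of_adj : ∀ ⦃u v w⦄, G.Adj u v → G.Adj u w → ¬ G.Adj v w
  exists_adj_adj : ∀ ⦃u v⦄, u ≠ v → ¬ G.Adj u v → ∃ w, G.Adj u w ∧ G.Adj w v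

namespace IsTriangleFreeQuarticDiamTwo

variable [Fintype V] [Fintype W] {G : SimpleGraph V} [DecidableRel G.Adj]

theorem comap (hG : G.IsTriangleFreeQuarticDiamTwo) (e : W ≃ V) :
    (G.comap e).IsTriangleFreeQuarticDiamTwo where
  regular w := by rw [← (Iso.comap e G).degree_eq w, Iso.comap_apply, hG.regular.degree_eq]
  not_adj_of_adj_of_adj _ _ _ h₁ h₂ := hG.not_adj_of_adj_of_adj h₁ h₂
  exists_adj_adj u v hne h := by
    obtain ⟨w, huw, hwv⟩ := hG.exists_adj_adj (e.injective.ne hne) h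
    exact ⟨e.symm w, by simpa using huw, by simpa using hwv⟩

theorem card_neighborFinset (hG : G.IsTriangleFreeQuarticDiamTwo) (v : V) :
    #(G.neighborFinset v) = 4 := by
  rw [card_neighborFinset_eq_degree, hG.regular.degree_eq]

variable [DecidableEq V] {l l' : List (V × V)}

theorem admissible_of_adj (hG : G.IsTriangleFreeQuarticDiamTwo) (hR : G.Realizes l l') {u v : V}
    (h : G.Adj u v) : Admissible l l' u v := by
  have hN : ∀ {w}, (edgeListGraph l).degree w = 4 →
      (edgeListGraph l).neighborFinset w = G.neighborFinset w := fun hw =>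
    eq_of_subset_of_card_le (fun x hx => by simpa using hR.le (by simpa using hx))
      (by rw [hG.card_neighborFinset, card_neighborFinset_eq_degree, hw])
  refine ⟨G.ne_of_adj h, fun hm => hR.not_adj _ hm h, fun hm => hR.not_adj _ hm h.symm,
    fun w hw => hG.not_adj_of_adj_of_adj (hR.le hw.1) (hR.le hw.2) h, fun hu => ?_, fun hv => ?_⟩
  · rw [← mem_neighborFinset, hN hu]
    simpa using h
  · rw [adj_comm, ← mem_neighborFinset, hN hv]
    simpa using h.symm

theorem not_adj_of_not_admissible (hG : G.IsTriangleFreeQuarticDiamTwo) (hR : G.Realizes l l')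
    {u v : V} (h : ¬ Admissible l l' u v) : ¬ G.Adj u v :=
  fun huv => h (hG.admissible_of_adj hR huv)

theorem adj_of_admissible (hG : G.IsTriangleFreeQuarticDiamTwo) (hR : G.Realizes l l') {v : V}
    (hv : #(univ.filter (Admissible l l' v)) ≤ 4) {u : V} (hu : Admissible l l' v u) :
    G.Adj v u := by
  have hsub : G.neighborFinset v ⊆ univ.filter (Admissible l l' v) := fun w hw => by
    simpa using hG.admissible_of_adj hR ((mem_neighborFinset _ _ _).1 hw)
  rw [← mem_neighborFinset, eq_of_subset_of_card_le hsub (hG.card_neighborFinset v ▸ hv)]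
  simpa using hu

theorem exists_adj_adj_mem (hG : G.IsTriangleFreeQuarticDiamTwo) (hR : G.Realizes l l') {u v : V}
    (hne : u ≠ v) (huv : ¬ Admissible l l' u v) {s : Finset V}
    (hs : ∀ w, Admissible l l' u w ∧ Admissible l l' w v → w ∈ s) :
    ∃ w ∈ s, G.Adj u w ∧ G.Adj w v := by
  obtain ⟨w, huw, hwv⟩ := hG.exists_adj_adj hne (hG.not_adj_of_not_admissible hR huv)
  exact ⟨w, hs w ⟨hG.admissible_of_adj hR huw, hG.admissible_of_adj hR hwv⟩, huw, hwv⟩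

theorem exists_insert_eq_neighborFinset (hG : G.IsTriangleFreeQuarticDiamTwo) {v a b c : V}
    (ha : G.Adj v a) (hb : G.Adj v b) (hc : G.Adj v c) (hab : a ≠ b) (hac : a ≠ c)
    (hbc : b ≠ c) : ∃ d, insert d {a, b, c} = G.neighborFinset v := by
  obtain ⟨d, -, hd⟩ := (exists_eq_insert_iff (s := {a, b, c}) (t := G.neighborFinset v)).2
    ⟨by simp [insert_subset_iff, ha, hb, hc],
      by rw [card_eq_three.2 ⟨a, b, c, hab, hac, hbc, rfl⟩, hG.card_neighborFinset]⟩
  exact ⟨d, hd⟩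

theorem exists_adj_of_card_inter_eq_three (hG : G.IsTriangleFreeQuarticDiamTwo) {x y : V}
    (hxy : ¬ G.Adj x y) (h3 : #(G.neighborFinset x ∩ G.neighborFinset y) = 3) :
    ∃ x₁ y₁, insert x₁ (G.neighborFinset x ∩ G.neighborFinset y) = G.neighborFinset x ∧
      insert y₁ (G.neighborFinset x ∩ G.neighborFinset y) = G.neighborFinset y ∧
      G.Adj x₁ y₁ := by
  obtain ⟨x₁, -, hx⟩ := exists_eq_insert_iff.2
    ⟨inter_subset_left, by rw [h3, hG.card_neighborFinset]⟩
  obtain ⟨y₁, hy₁S, hy⟩ := exists_eq_insert_iff.2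
    ⟨inter_subset_right, by rw [h3, hG.card_neighborFinset]⟩
  refine ⟨x₁, y₁, hx, hy, ?_⟩
  have hyy₁ := adj_of_insert_eq_neighborFinset hy
  have hxy₁ : ¬ G.Adj x y₁ := fun h =>
    hy₁S (mem_inter.2 ⟨(mem_neighborFinset _ _ _).2 h, (mem_neighborFinset _ _ _).2 hyy₁⟩)
  obtain ⟨w, hxw, hwy₁⟩ := hG.exists_adj_adj (fun h => hxy (by rw [h]; exact hyy₁.symm)) hxy₁
  have hw : w ∈ insert x₁ (G.neighborFinset x ∩ G.neighborFinset y) := by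
    rw [hx]
    exact (mem_neighborFinset _ _ _).2 hxw
  rcases mem_insert.1 hw with rfl | hwS
  · exact hwy₁
  · exact absurd hwy₁
      (hG.not_adj_of_adj_of_adj ((mem_neighborFinset _ _ _).1 (mem_inter.1 hwS).2) hyy₁)

theorem exists_forall_mem_or_eq (hG : G.IsTriangleFreeQuarticDiamTwo)
    (hn : Fintype.card V = 12) {u v : V} (huv : G.Adj u v) {S : Finset V} (hS : #S = 3)
    (hdisj : Disjoint (G.neighborFinset u ∪ G.neighborFinset v) S) :
    ∃ a, ¬ G.Adj u a ∧ ¬ G.Adj v a ∧ a ∉ S ∧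
      ∀ w, w ∈ G.neighborFinset u ∨ w ∈ G.neighborFinset v ∨ w ∈ S ∨ w = a := by
  have hdisj' : Disjoint (G.neighborFinset u) (G.neighborFinset v) := Finset.disjoint_left.2
    fun w hu hv => hG.not_adj_of_adj_of_adj huv ((mem_neighborFinset _ _ _).1 hu)
      ((mem_neighborFinset _ _ _).1 hv)
  obtain ⟨a, ha⟩ := card_eq_one.1 (show #(G.neighborFinset u ∪ G.neighborFinset v ∪ S)ᶜ = 1 by
    rw [card_compl, card_union_of_disjoint hdisj, card_union_of_disjoint hdisj',
      hG.card_neighborFinset, hG.card_neighborFinset, hS, hn])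
  have hmem : ∀ w, w ∉ G.neighborFinset u ∪ G.neighborFinset v ∪ S ↔ w = a := fun w => by
    rw [← mem_compl, ha, mem_singleton]
  have ha' := (hmem a).2 rfl
  simp only [mem_union, not_or, mem_neighborFinset] at ha' hmem
  refine ⟨a, ha'.1.1, ha'.1.2, ha'.2, fun w => ?_⟩
  by_cases hw : w = a
  · exact .inr (.inr (.inr hw))
  · simp only [mem_neighborFinset]
    have := mt (hmem w).1 hw
    tauto

end IsTriangleFreeQuarticDiamTwo

end SimpleGraph

open SimpleGraph

/-- The edges of `G2` at `x`, `y`, `x₁`, `y₁`, together with `a₂a₃` and `a₃a₄`. -/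
def frameEdges : List (Fin 12 × Fin 12) :=
  [(0, 2), (0, 4), (0, 5), (0, 6), (1, 3), (1, 4), (1, 5), (1, 6), (2, 3), (2, 7), (2, 8),
   (3, 10), (3, 11), (8, 9), (9, 10)]

theorem SimpleGraph.IsTriangleFreeQuarticDiamTwo.exists_equiv_frame {V : Type*} [Fintype V]
    [DecidableEq V] {G : SimpleGraph V} [DecidableRel G.Adj] (hG : G.IsTriangleFreeQuarticDiamTwo)
    (hn : Fintype.card V = 12) {x y : V} (hxy : ¬ G.Adj x y)
    (h3 : #(G.neighborFinset x ∩ G.neighborFinset y) = 3) :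
    ∃ e : Fin 12 ≃ V, edgeListGraph frameEdges ≤ G.comap e := by
  obtain ⟨x₁, y₁, hx, hy, hx₁y₁⟩ := hG.exists_adj_of_card_inter_eq_three hxy h3
  set S := G.neighborFinset x ∩ G.neighborFinset y
  obtain ⟨z₁, z₂, z₃, -, -, -, hS⟩ := card_eq_three.1 h3
  have hxS : ∀ z ∈ S, G.Adj x z := fun z hz => (mem_neighborFinset _ _ _).1 (mem_inter.1 hz).1
  have hyS : ∀ z ∈ S, G.Adj y z := fun z hz => (mem_neighborFinset _ _ _).1 (mem_inter.1 hz).2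
  have hxx₁ := adj_of_insert_eq_neighborFinset hx
  have hyy₁ := adj_of_insert_eq_neighborFinset hy
  have hdisj : Disjoint (G.neighborFinset x₁ ∪ G.neighborFinset y₁) S := by
    refine disjoint_union_left.2 ⟨Finset.disjoint_left.2 fun z hz hzS => ?_,
      Finset.disjoint_left.2 fun z hz hzS => ?_⟩
    · exact hG.not_adj_of_adj_of_adj hxx₁ (hxS z hzS) ((mem_neighborFinset _ _ _).1 hz)
    · exact hG.not_adj_of_adj_of_adj hyy₁ (hyS z hzS) ((mem_neighborFinset _ _ _).1 hz)
  obtain ⟨a₃, hx₁a₃, hy₁a₃, ha₃S, hcover⟩ := hG.exists_forall_mem_or_eq hn hx₁y₁ h3 hdisj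
  obtain ⟨a₂, hx₁a₂, ha₂a₃⟩ :=
    hG.exists_adj_adj (fun h => hy₁a₃ (by rw [← h]; exact hx₁y₁.symm)) hx₁a₃
  obtain ⟨a₄, hy₁a₄, ha₄a₃⟩ :=
    hG.exists_adj_adj (fun h => hx₁a₃ (by rw [← h]; exact hx₁y₁)) hy₁a₃
  have hxa₃ : ¬ G.Adj x a₃ := by
    rw [← mem_neighborFinset, ← hx, mem_insert, not_or]
    exact ⟨fun h => hy₁a₃ (h ▸ hx₁y₁.symm), ha₃S⟩
  have hya₃ : ¬ G.Adj y a₃ := by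
    rw [← mem_neighborFinset, ← hy, mem_insert, not_or]
    exact ⟨fun h => hx₁a₃ (h ▸ hx₁y₁), ha₃S⟩
  obtain ⟨a₁, hx₁⟩ := hG.exists_insert_eq_neighborFinset hxx₁.symm hx₁y₁ hx₁a₂
    (fun h => hxy (by rw [h]; exact hyy₁.symm)) (fun h => hxa₃ (h ▸ ha₂a₃))
    (fun h => hy₁a₃ (h ▸ ha₂a₃))
  obtain ⟨a₅, hy₁⟩ := hG.exists_insert_eq_neighborFinset hyy₁.symm hx₁y₁.symm hy₁a₄
    (fun h => hxy (by rw [h]; exact hxx₁)) (fun h => hya₃ (h ▸ ha₄a₃))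
    (fun h => hx₁a₃ (h ▸ ha₄a₃))
  refine exists_equiv_edgeListGraph_le (f := ![x, y, x₁, y₁, z₁, z₂, z₃, a₁, a₂, a₃, a₄, a₅])
    (by simp [hn]) (fun v => ?_) ?_
  · have hv := hcover v
    rw [← hx₁, ← hy₁, hS] at hv
    simp only [mem_insert, mem_singleton, or_assoc] at hv
    rcases hv with rfl | rfl | rfl | rfl | rfl | rfl | rfl | rfl | rfl | rfl | rfl | rfl
    exacts [⟨7, rfl⟩, ⟨0, rfl⟩, ⟨3, rfl⟩, ⟨8, rfl⟩, ⟨11, rfl⟩, ⟨1, rfl⟩, ⟨2, rfl⟩, ⟨10, rfl⟩,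
      ⟨4, rfl⟩, ⟨5, rfl⟩, ⟨6, rfl⟩, ⟨9, rfl⟩]
  · have hz : ∀ z ∈ ({z₁, z₂, z₃} : Finset V), G.Adj x z ∧ G.Adj y z := fun z hz =>
      ⟨hxS z (hS ▸ hz), hyS z (hS ▸ hz)⟩
    simp only [mem_insert, mem_singleton, forall_eq_or_imp, forall_eq] at hz
    simp only [frameEdges, List.forall_mem_cons, List.not_mem_nil, IsEmpty.forall_iff,
      implies_true, and_true]
    exact ⟨hxx₁, hz.1.1, hz.2.1.1, hz.2.2.1, hyy₁, hz.1.2, hz.2.1.2, hz.2.2.2, hx₁y₁,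
      adj_of_insert_eq_neighborFinset hx₁, hx₁a₂, hy₁a₄, adj_of_insert_eq_neighborFinset hy₁,
      ha₂a₃, ha₄a₃.symm⟩

theorem G2_adj_or_path_three (i j : Fin 12) (hij : i ≠ j) :
    G2.Adj i j ∨ ∃ a b, G2.Adj i a ∧ G2.Adj a b ∧ G2.Adj b j := by
  revert i j
  decide

theorem G2_degree (v : Fin 12) : G2.degree v = 4 := by
  revert v
  decide

section Frame

local notation "x" => (0 : Fin 12)
local notation "y" => (1 : Fin 12)
local notation "x₁" => (2 : Fin 12)
local notation "y₁" => (3 : Fin 12)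
local notation "z₁" => (4 : Fin 12)
local notation "z₂" => (5 : Fin 12)
local notation "z₃" => (6 : Fin 12)
local notation "a₁" => (7 : Fin 12)
local notation "a₂" => (8 : Fin 12)
local notation "a₃" => (9 : Fin 12)
local notation "a₄" => (10 : Fin 12)
local notation "a₅" => (11 : Fin 12)

/-! Each forced edge or non-edge of `H` below comes from `adj_of_admissible` or
`exists_adj_adj_mem`, whose side conditions on the edges found so far are checked by `decide`.
The permutations of `z₁, z₂, z₃` and the reflection `x ↔ y, x₁ ↔ y₁, a₁ ↔ a₅, a₂ ↔ a₄` preserve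
the frame, so symmetric cases are reduced to one another by pulling `H` back along them. -/

variable {H : SimpleGraph (Fin 12)}

theorem frame_le_comap {σ : Equiv.Perm (Fin 12)}
    (hσ : ∀ i j, (edgeListGraph frameEdges).Adj i j →
      (edgeListGraph frameEdges).Adj (σ i) (σ j))
    (hB : edgeListGraph frameEdges ≤ H) : edgeListGraph frameEdges ≤ H.comap σ :=
  fun i j h => hB (hσ i j h)

theorem nonempty_hom_of_comap (σ : Equiv.Perm (Fin 12)) (h : Nonempty (G2 →g H.comap σ)) :
    Nonempty (G2 →g H) :=
  h.map (Iso.comap σ H).toHom.comp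

variable [DecidableRel H.Adj]

theorem not_adj_a₁_z₁_of_adj_a₃ (hH : H.IsTriangleFreeQuarticDiamTwo)
    (hB : edgeListGraph frameEdges ≤ H) (h₁ : H.Adj a₃ a₁) (h₃ : H.Adj a₃ z₃) :
    ¬ H.Adj a₁ z₁ := by
  intro h
  have hR := (((Realizes.of_le hB).cons h₁).cons h₃).cons h
  have h₄₁ := hH.adj_of_admissible hR (v := a₄) (u := z₁) (by decide) (by decide)
  have h₄₂ := hH.adj_of_admissible hR (v := a₄) (u := z₂) (by decide) (by decide)
  have hR := (hR.cons h₄₁).cons h₄₂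
  obtain ⟨w, hw, h₂w, -⟩ := hH.exists_adj_adj_mem hR (u := a₂) (v := y) (s := {z₂})
    (by decide) (by decide) (by decide)
  rw [mem_singleton] at hw
  subst hw
  obtain ⟨w, hw, -⟩ := hH.exists_adj_adj_mem (hR.cons h₂w) (u := a₁) (v := z₂) (s := ∅)
    (by decide) (by decide) (by decide)
  exact notMem_empty w hw

theorem not_adj_a₃_z₃_of_adj_a₃_a₁ (hH : H.IsTriangleFreeQuarticDiamTwo)
    (hB : edgeListGraph frameEdges ≤ H) (h₁ : H.Adj a₃ a₁) : ¬ H.Adj a₃ z₃ := by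
  intro h₃
  obtain ⟨w, hw, h₁w, -⟩ := hH.exists_adj_adj_mem (((Realizes.of_le hB).cons h₁).cons h₃)
    (u := a₁) (v := y) (s := {z₁, z₂}) (by decide) (by decide) (by decide)
  simp only [mem_insert, mem_singleton] at hw
  rcases hw with rfl | rfl
  · exact not_adj_a₁_z₁_of_adj_a₃ hH hB h₁ h₃ h₁w
  · exact not_adj_a₁_z₁_of_adj_a₃ (hH.comap (Equiv.swap z₁ z₂)) (frame_le_comap (by decide) hB)
      h₁ h₃ h₁w

theorem not_adj_a₃_a₁ (hH : H.IsTriangleFreeQuarticDiamTwo) (hB : edgeListGraph frameEdges ≤ H) :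
    ¬ H.Adj a₃ a₁ := by
  intro h₁
  obtain ⟨w, hw, h₃w, -⟩ := hH.exists_adj_adj_mem ((Realizes.of_le hB).cons h₁)
    (u := a₃) (v := x) (s := {z₁, z₂, z₃}) (by decide) (by decide) (by decide)
  simp only [mem_insert, mem_singleton] at hw
  rcases hw with rfl | rfl | rfl
  · exact not_adj_a₃_z₃_of_adj_a₃_a₁ (hH.comap (Equiv.swap z₁ z₃))
      (frame_le_comap (by decide) hB) h₁ h₃w
  · exact not_adj_a₃_z₃_of_adj_a₃_a₁ (hH.comap (Equiv.swap z₂ z₃))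
      (frame_le_comap (by decide) hB) h₁ h₃w
  · exact not_adj_a₃_z₃_of_adj_a₃_a₁ hH hB h₁ h₃w

theorem not_adj_a₃_a₅ (hH : H.IsTriangleFreeQuarticDiamTwo) (hB : edgeListGraph frameEdges ≤ H) :
    ¬ H.Adj a₃ a₅ :=
  not_adj_a₃_a₁
    (hH.comap (Equiv.swap x y * Equiv.swap x₁ y₁ * Equiv.swap a₁ a₅ * Equiv.swap a₂ a₄))
    (frame_le_comap (by decide) hB)

theorem G2_le_of_adj (hH : H.IsTriangleFreeQuarticDiamTwo) (hB : edgeListGraph frameEdges ≤ H)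
    (h₃₁ : H.Adj a₃ z₁) (h₃₃ : H.Adj a₃ z₃) (h₂₂ : H.Adj a₂ z₂) (h₄₂ : H.Adj a₄ z₂)
    (h₁₁ : H.Adj a₁ z₁) : G2 ≤ H := by
  have hR := (((((Realizes.of_le hB).cons h₃₁).cons h₃₃).cons h₂₂).cons h₄₂).cons h₁₁
  obtain ⟨w, hw, h₅₃, -⟩ := hH.exists_adj_adj_mem hR (u := a₅) (v := x) (s := {z₃})
    (by decide) (by decide) (by decide)
  rw [mem_singleton] at hw
  subst hw
  obtain ⟨w, hw, h₁₅, -⟩ := hH.exists_adj_adj_mem (hR.cons h₅₃) (u := a₁) (v := z₃) (s := {a₅})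
    (by decide) (by decide) (by decide)
  rw [mem_singleton] at hw
  subst hw
  have hR := (hR.cons h₅₃).cons h₁₅
  have h₁₄ := hH.adj_of_admissible hR (v := a₁) (u := a₄) (by decide) (by decide)
  have h₂₅ := hH.adj_of_admissible hR (v := a₂) (u := a₅) (by decide) (by decide)
  refine le_trans ?_ ((hR.cons h₁₄).cons h₂₅).le
  intro i j
  revert i j
  decide

theorem nonempty_hom_of_not_adj_a₃_z₂ (hH : H.IsTriangleFreeQuarticDiamTwo)
    (hB : edgeListGraph frameEdges ≤ H) (h₃₂ : ¬ H.Adj a₃ z₂) : Nonempty (G2 →g H) := by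
  have hR : H.Realizes frameEdges [(a₃, a₁), (a₃, a₅), (a₃, z₂)] :=
    ⟨hB, by simp [not_adj_a₃_a₁ hH hB, not_adj_a₃_a₅ hH hB, h₃₂]⟩
  have h₃₁ := hH.adj_of_admissible hR (v := a₃) (u := z₁) (by decide) (by decide)
  have h₃₃ := hH.adj_of_admissible hR (v := a₃) (u := z₃) (by decide) (by decide)
  have hR := (hR.cons h₃₁).cons h₃₃
  obtain ⟨w, hw, h₂₂, -⟩ := hH.exists_adj_adj_mem hR (u := a₂) (v := y) (s := {z₂})
    (by decide) (by decide) (by decide)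
  rw [mem_singleton] at hw
  subst hw
  obtain ⟨w, hw, h₄₂, -⟩ := hH.exists_adj_adj_mem (hR.cons h₂₂) (u := a₄) (v := x) (s := {z₂})
    (by decide) (by decide) (by decide)
  rw [mem_singleton] at hw
  subst hw
  obtain ⟨w, hw, h₁w, -⟩ := hH.exists_adj_adj_mem ((hR.cons h₂₂).cons h₄₂) (u := a₁) (v := y)
    (s := {z₁, z₃}) (by decide) (by decide) (by decide)
  simp only [mem_insert, mem_singleton] at hw
  rcases hw with rfl | rfl
  · exact ⟨Hom.ofLE (G2_le_of_adj hH hB h₃₁ h₃₃ h₂₂ h₄₂ h₁w)⟩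
  · exact nonempty_hom_of_comap (Equiv.swap z₁ z₃) ⟨Hom.ofLE (G2_le_of_adj (hH.comap _)
      (frame_le_comap (by decide) hB) h₃₃ h₃₁ h₂₂ h₄₂ h₁w)⟩

theorem nonempty_hom_G2 (hH : H.IsTriangleFreeQuarticDiamTwo)
    (hB : edgeListGraph frameEdges ≤ H) : Nonempty (G2 →g H) := by
  by_cases h₃₂ : H.Adj a₃ z₂
  · by_cases h₃₁ : H.Adj a₃ z₁
    · have h₃₃ : ¬ H.Adj a₃ z₃ := hH.not_adj_of_not_admissible
        (((Realizes.of_le hB).cons h₃₁).cons h₃₂) (by decide)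
      exact nonempty_hom_of_comap (Equiv.swap z₂ z₃) (nonempty_hom_of_not_adj_a₃_z₂
        (hH.comap _) (frame_le_comap (by decide) hB) h₃₃)
    · exact nonempty_hom_of_comap (Equiv.swap z₁ z₂) (nonempty_hom_of_not_adj_a₃_z₂
        (hH.comap _) (frame_le_comap (by decide) hB) h₃₁)
  · exact nonempty_hom_of_not_adj_a₃_z₂ hH hB h₃₂

end Frame

theorem stmt_14_general {V : Type*} [Fintype V] [DecidableEq V] (G : SimpleGraph V) [DecidableRel G.Adj]
    (hn : Fintype.card V = 12)
    (hreg : G.IsRegularOfDegree 4)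
    (ha : ∀ x y : V, G.Adj x y → G.neighborFinset x ∩ G.neighborFinset y = ∅)
    (hna : ∀ x y : V, x ≠ y → ¬ G.Adj x y →
      (G.neighborFinset x ∩ G.neighborFinset y).card = 1 ∨
      (G.neighborFinset x ∩ G.neighborFinset y).card = 2 ∨
      (G.neighborFinset x ∩ G.neighborFinset y).card = 3)
    (hr3 : ∃ x y : V, x ≠ y ∧ ¬ G.Adj x y ∧
      (G.neighborFinset x ∩ G.neighborFinset y).card = 3) :
    Nonempty (G ≃g G2) := by
  have hG : G.IsTriangleFreeQuarticDiamTwo :=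
    { regular := hreg
      not_adj_of_adj_of_adj := fun u v w huv huw hvw =>
        eq_empty_iff_forall_notMem.1 (ha u v huv) w (by simp [huw, hvw])
      exists_adj_adj := fun u v hne h => by
        obtain ⟨w, hw⟩ := card_pos.1 (show 0 < #(G.neighborFinset u ∩ G.neighborFinset v) by
          rcases hna u v hne h with h | h | h <;> omega)
        simp only [mem_inter, mem_neighborFinset] at hw
        exact ⟨w, hw.1, hw.2.symm⟩ }
  obtain ⟨x, y, -, hxy, h3⟩ := hr3
  obtain ⟨e, he⟩ := hG.exists_equiv_frame hn hxy h3
  obtain ⟨f⟩ := nonempty_hom_G2 (hG.comap e) he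
  let φ : G2 →g G := (Iso.comap e G).toHom.comp f
  have hφ : Function.Bijective φ := (Fintype.bijective_iff_injective_and_card φ).2
    ⟨φ.injective_of_adj_or_path_three hG.not_adj_of_adj_of_adj G2_adj_or_path_three, by simp [hn]⟩
  obtain ⟨ψ⟩ := φ.nonempty_iso_of_bijective hφ fun v => by rw [hreg.degree_eq, G2_degree]
  exact ⟨ψ.symm⟩

theorem stmt_14 {V : Type*} [Fintype V] [DecidableEq V] (G : SimpleGraph V) [DecidableRel G.Adj]
    (hn : Fintype.card V = 12)
    (hreg : G.IsRegularOfDegree 4)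
    (ha : ∀ x y : V, G.Adj x y → G.neighborFinset x ∩ G.neighborFinset y = ∅)
    (hna : ∀ x y : V, x ≠ y → ¬ G.Adj x y →
      (G.neighborFinset x ∩ G.neighborFinset y).card = 1 ∨
      (G.neighborFinset x ∩ G.neighborFinset y).card = 2 ∨
      (G.neighborFinset x ∩ G.neighborFinset y).card = 3)
    (hr1 : ∃ x y : V, x ≠ y ∧ ¬ G.Adj x y ∧
      (G.neighborFinset x ∩ G.neighborFinset y).card = 1)
    (hr2 : ∃ x y : V, x ≠ y ∧ ¬ G.Adj x y ∧
      (G.neighborFinset x ∩ G.neighborFinset y).card = 2)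
    (hr3 : ∃ x y : V, x ≠ y ∧ ¬ G.Adj x y ∧
      (G.neighborFinset x ∩ G.neighborFinset y).card = 3) :
    Nonempty (G ≃g G2) :=
  stmt_14_general G hn hreg ha hna hr3
end

section
/- Let G be a k-regular graph, k ≥ 4, in which adjacent vertices have no common neighbour and non-adjacent vertices have at least k−3 common neighbours. Fix a vertex u, a neighbour u₁ of u, and suppose the set of vertices outside N[u] has size k + 2. Then for any vertex x outside N[u] that is not a neighbour of u₁, one has k − 3 ≤ |N(x) ∩ N(u₁) \ {u}| ≤ 3; in particular k ≤ 6. -/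
/-!
Since `u` and `u₁` are adjacent in a triangle-free graph, their neighbourhoods are disjoint, so a
vertex `x` splits its `k` neighbours between `N(u)` and `N(u₁)`. When `x ∉ N[u]` is not adjacent
to `u` or `u₁`, at least `k - 3` of them lie in `N(u)`, leaving at most `3` in `N(u₁)`, while at
least `k - 3` must lie there. Such an `x` exists because there are `k + 2` vertices outside
`N[u]` and only `k` of them can be neighbours of `u₁`; comparing the bounds gives `k ≤ 6`.
-/

open Finset

namespace SimpleGraph

variable {V : Type*} [DecidableEq V] {G : SimpleGraph V} [G.LocallyFinite]

theorem card_inter_add_card_inter_le_degree {u v : V}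
    (h : Disjoint (G.neighborFinset u) (G.neighborFinset v)) (x : V) :
    #(G.neighborFinset x ∩ G.neighborFinset u) + #(G.neighborFinset x ∩ G.neighborFinset v)
      ≤ G.degree x := by
  rw [← card_neighborFinset_eq_degree,
    ← card_union_of_disjoint (h.mono inter_subset_right inter_subset_right)]
  exact card_le_card (union_subset inter_subset_left inter_subset_left)

end SimpleGraph

open SimpleGraph

theorem stmt_18_general {V : Type*} [Fintype V] [DecidableEq V] (G : SimpleGraph V) [DecidableRel G.Adj]
    (k : ℕ)
    (hreg : G.IsRegularOfDegree k)
    (ha : ∀ x y : V, G.Adj x y → G.neighborFinset x ∩ G.neighborFinset y = ∅)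
    (hna : ∀ x y : V, x ≠ y → ¬ G.Adj x y →
      k - 3 ≤ (G.neighborFinset x ∩ G.neighborFinset y).card)
    (u u₁ : V) (hu₁ : G.Adj u u₁)
    (hout : (Finset.univ \ insert u (G.neighborFinset u)).card = k + 2) :
    (∀ x : V, x ∉ insert u (G.neighborFinset u) → ¬ G.Adj u₁ x →
      k - 3 ≤ ((G.neighborFinset x ∩ G.neighborFinset u₁).erase u).card ∧
      ((G.neighborFinset x ∩ G.neighborFinset u₁).erase u).card ≤ 3) ∧
    k ≤ 6 := by
  have bounds : ∀ x : V, x ∉ insert u (G.neighborFinset u) → ¬ G.Adj u₁ x →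
      k - 3 ≤ ((G.neighborFinset x ∩ G.neighborFinset u₁).erase u).card ∧
      ((G.neighborFinset x ∩ G.neighborFinset u₁).erase u).card ≤ 3 := by
    intro x hx hxu₁
    simp only [mem_insert, mem_neighborFinset, not_or] at hx
    obtain ⟨hxu, hux⟩ := hx
    have hxu₁_ne : x ≠ u₁ := by rintro rfl; exact hux hu₁
    rw [erase_eq_of_notMem fun h => hux ((G.mem_neighborFinset x u).1 (mem_inter.1 h).1).symm]
    have hsplit := card_inter_add_card_inter_le_degree
      (disjoint_iff_inter_eq_empty.2 (ha u u₁ hu₁)) x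
    have hnu := hna x u hxu (fun h => hux h.symm)
    rw [hreg.degree_eq] at hsplit
    exact ⟨hna x u₁ hxu₁_ne (fun h => hxu₁ h.symm), by omega⟩
  refine ⟨bounds, ?_⟩
  obtain ⟨x, hx, hxu₁⟩ := exists_mem_notMem_of_card_lt_card (s := G.neighborFinset u₁)
    (by rw [hout, card_neighborFinset_eq_degree, hreg.degree_eq]; omega)
  obtain ⟨hlower, hupper⟩ := bounds x (mem_sdiff.1 hx).2 (by simpa using hxu₁)
  omega

theorem stmt_18 {V : Type*} [Fintype V] [DecidableEq V] (G : SimpleGraph V) [DecidableRel G.Adj]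
    (k : ℕ) (hk : 4 ≤ k)
    (hreg : G.IsRegularOfDegree k)
    (ha : ∀ x y : V, G.Adj x y → G.neighborFinset x ∩ G.neighborFinset y = ∅)
    (hna : ∀ x y : V, x ≠ y → ¬ G.Adj x y →
      k - 3 ≤ (G.neighborFinset x ∩ G.neighborFinset y).card)
    (u u₁ : V) (hu₁ : G.Adj u u₁)
    (hout : (Finset.univ \ insert u (G.neighborFinset u)).card = k + 2) :
    (∀ x : V, x ∉ insert u (G.neighborFinset u) → ¬ G.Adj u₁ x →
      k - 3 ≤ ((G.neighborFinset x ∩ G.neighborFinset u₁).erase u).card ∧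
      ((G.neighborFinset x ∩ G.neighborFinset u₁).erase u).card ≤ 3) ∧
    k ≤ 6 :=
  stmt_18_general G k hreg ha hna u u₁ hu₁ hout
end
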